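/- arXiv:1604.04488 — 8 statements merged into one kernel-verified Lean document; each statement's English description precedes it below -/
import Mathlib

section
/- Let G be a locally compact Hausdorff group acting with the convergence property on a compact Hausdorff space T. If the limit set Λ has at least 3 points, then Λ is a perfect subset of T (every point of Λ is an accumulation point of Λ), and hence Λ is infinite. -/
open Filter Topology Set Pointwise

/-- A (filter representing a) net on `G` collapses to `a` except at `b`, for the action `act`
on `T`: uniform convergence to the constant `a` on compact subsets of `T \ {b}`. -/
def CollapsesF {G T : Type*} [TopologicalSpace T] (act : G → T → T)
    (l : Filter G) (a b : T) : Prop :=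
  ∀ K : Set T, IsCompact K → b ∉ K → ∀ U ∈ nhds a, ∀ᶠ g in l, ∀ k ∈ K, act g k ∈ U

/-- The action `act` of `G` on `T` has the convergence property. -/
def IsConvergenceF {G T : Type*} [TopologicalSpace G] [TopologicalSpace T]
    (act : G → T → T) : Prop :=
  ∀ l : Filter G, l.NeBot → (∀ x : G, ¬ ClusterPt x l) →
    ∃ l' : Filter G, l' ≤ l ∧ l'.NeBot ∧ ∃ a b : T, CollapsesF act l' a b

/-- The limit set: the set of attractive points of collapsing nets. -/
def limitSetF {G T : Type*} [TopologicalSpace T] (act : G → T → T) : Set T :=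
  {a | ∃ b : T, ∃ l : Filter G, l.NeBot ∧ CollapsesF act l a b}

lemma smul_mem_limitSetF {G T : Type*} [Group G] [TopologicalSpace T]
    [MulAction G T] [ContinuousConstSMul G T]
    {a : T} (ha : a ∈ limitSetF (fun (g : G) (t : T) => g • t)) (g : G) :
    g • a ∈ limitSetF (fun (g : G) (t : T) => g • t) := by
  obtain ⟨b, l, hne, hc⟩ := ha
  refine ⟨b, l.map (fun h => g * h), hne.map _, ?_⟩
  intro K hK hbK U hU
  have hV : (fun t => g • t) ⁻¹' U ∈ nhds a :=
    (continuous_const_smul g).continuousAt.preimage_mem_nhds hU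
  have := hc K hK hbK _ hV
  rw [Filter.eventually_map]
  filter_upwards [this] with h hh k hk
  have := hh k hk
  simpa [mul_smul] using this

/-- If the limit set of a convergence action has at least 3 points, it is perfect
(every point is an accumulation point of it), hence infinite. -/
theorem limitSet_perfect_of_three_points {G T : Type*}
    [Group G] [TopologicalSpace G] [IsTopologicalGroup G] [LocallyCompactSpace G] [T2Space G]
    [TopologicalSpace T] [CompactSpace T] [T2Space T]
    [MulAction G T] [ContinuousSMul G T]
    (hconv : IsConvergenceF (fun (g : G) (t : T) => g • t))
    (h3 : 3 ≤ (limitSetF (fun (g : G) (t : T) => g • t)).encard) :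
    (∀ a ∈ limitSetF (fun (g : G) (t : T) => g • t),
        AccPt a (Filter.principal (limitSetF (fun (g : G) (t : T) => g • t)))) ∧
      (limitSetF (fun (g : G) (t : T) => g • t)).Infinite := by
  set Λ := limitSetF (fun (g : G) (t : T) => g • t) with hΛ
  have hacc : ∀ a ∈ Λ, AccPt a (Filter.principal Λ) := by
    intro a ha
    obtain ⟨b, l, hne, hc⟩ := ha
    have h2 : 1 < (Λ \ {b}).encard := by
      have hsub : Λ ⊆ (Λ \ {b}) ∪ {b} := by
        intro z hz
        by_cases hzb : z = b
        · exact Or.inr (by simp [hzb])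
        · exact Or.inl ⟨hz, hzb⟩
      have h1 : Λ.encard ≤ (Λ \ {b}).encard + 1 := by
        calc Λ.encard ≤ ((Λ \ {b}) ∪ {b}).encard := Set.encard_le_encard hsub
          _ ≤ (Λ \ {b}).encard + ({b} : Set T).encard := Set.encard_union_le _ _
          _ = (Λ \ {b}).encard + 1 := by rw [Set.encard_singleton]
      have h3' : (3 : ℕ∞) ≤ (Λ \ {b}).encard + 1 := le_trans h3 h1
      by_contra hlt
      push_neg at hlt
      have : (Λ \ {b}).encard + 1 ≤ 1 + 1 := add_le_add_left hlt 1
      have : (3 : ℕ∞) ≤ 2 := le_trans h3' (by rwa [one_add_one_eq_two] at this)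
      norm_num at this
    obtain ⟨x, y, hx, hy, hxy⟩ := Set.one_lt_encard_iff.mp h2
    rw [accPt_iff_nhds]
    intro U hU
    have hK : IsCompact ({x, y} : Set T) := (Set.toFinite ({x, y} : Set T)).isCompact
    have hb : b ∉ ({x, y} : Set T) := by
      rintro (rfl | rfl)
      · exact hx.2 rfl
      · exact hy.2 rfl
    obtain ⟨g, hg⟩ := (hc {x, y} hK hb U hU).exists
    have hgx : g • x ∈ U := hg x (by simp)
    have hgy : g • y ∈ U := hg y (by simp)
    have hgxΛ : g • x ∈ Λ := smul_mem_limitSetF hx.1 g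
    have hgyΛ : g • y ∈ Λ := smul_mem_limitSetF hy.1 g
    have hne' : g • x ≠ g • y := fun h => hxy (MulAction.injective g h)
    by_cases hxa : g • x = a
    · exact ⟨g • y, ⟨hgy, hgyΛ⟩, fun h => hne' (hxa.trans h.symm)⟩
    · exact ⟨g • x, ⟨hgx, hgxΛ⟩, hxa⟩
  refine ⟨hacc, ?_⟩
  have hnonempty : Λ.Nonempty := by
    rw [← Set.encard_pos]
    exact lt_of_lt_of_le (by norm_num) h3
  obtain ⟨a, ha⟩ := hnonempty
  by_contra hfin
  rw [Set.not_infinite] at hfin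
  have hacc' := hacc a ha
  rw [accPt_iff_nhds] at hacc'
  have hcl : IsClosed (Λ \ {a}) := (hfin.diff (t := {a})).isClosed
  have hmem : (Λ \ {a})ᶜ ∈ 𝓝 a := hcl.isOpen_compl.mem_nhds (by simp)
  obtain ⟨z, hz, hzne⟩ := hacc' _ hmem
  exact hz.1 ⟨hz.2, hzne⟩
end

section
/- Let G be a locally compact Hausdorff group acting continuously with the convergence property on a compact Hausdorff space T with limit set Λ. Let T' be the quotient of T by the equivalence relation identifying two points iff they lie in the same connected component of Λ (points of T \ Λ are only equivalent to themselves). Then T' is a compact Hausdorff space and the image Λ' of Λ in T' is totally disconnected. -/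
open Filter Topology Set Pointwise

/-- The equivalence relation on `T` identifying two points iff they lie in the same
connected component of `Λ`; points outside `Λ` are only equivalent to themselves. -/
def lamSetoid {T : Type*} [TopologicalSpace T] (Λ : Set T) : Setoid T where
  r x y := x = y ∨ (x ∈ Λ ∧ y ∈ Λ ∧ connectedComponentIn Λ x = connectedComponentIn Λ y)
  iseqv := by
    constructor
    · intro x; exact Or.inl rfl
    · rintro x y (rfl | ⟨hx, hy, h⟩)
      · exact Or.inl rfl
      · exact Or.inr ⟨hy, hx, h.symm⟩
    · rintro x y z (rfl | ⟨hx, hy, h⟩) h2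
      · exact h2
      · rcases h2 with rfl | ⟨hy', hz, h'⟩
        · exact Or.inr ⟨hx, hy, h⟩
        · exact Or.inr ⟨hx, hz, h.trans h'⟩

lemma limitSetF_isClosed {G T : Type*} [TopologicalSpace T] [CompactSpace T] [T2Space T]
    (act : G → T → T) : IsClosed (limitSetF act) := by
  refine isClosed_of_closure_subset ?_
  intro a ha
  have hne : (𝓝 a ⊓ 𝓟 (limitSetF act)).NeBot := mem_closure_iff_clusterPt.mp ha
  obtain ⟨𝒰, h𝒰⟩ := Filter.exists_ultrafilter_le (𝓝 a ⊓ 𝓟 (limitSetF act))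
  choose! bf lf hch using fun x (hx : x ∈ limitSetF act) =>
    (hx : ∃ b l, Filter.NeBot l ∧ CollapsesF act l x b)
  obtain ⟨b, -, hb⟩ := isCompact_univ.ultrafilter_le_nhds (𝒰.map bf)
    (le_principal_iff.mpr univ_mem)
  set S : Set T → Set T → Set G := fun K U => {g | ∀ k ∈ K, act g k ∈ U} with hSdef
  set fam : Set (Set G) := {s | ∃ K U, IsCompact K ∧ b ∉ K ∧ U ∈ 𝓝 a ∧ s = S K U} with hfam
  have key : ∀ K U, IsCompact K → b ∉ K → U ∈ 𝓝 a → (S K U).Nonempty := by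
    intro K U hK hbK hU
    have h1 : limitSetF act ∈ 𝒰 := h𝒰 (mem_inf_of_right (mem_principal_self _))
    have h2 : interior U ∈ 𝒰 := h𝒰 (mem_inf_of_left (interior_mem_nhds.mpr hU))
    have h3 : bf ⁻¹' Kᶜ ∈ 𝒰 := hb (hK.isClosed.isOpen_compl.mem_nhds hbK)
    obtain ⟨x, hxΛ, hxU, hxK⟩ :=
      Filter.nonempty_of_mem (f := (𝒰 : Filter T)) (inter_mem h1 (inter_mem h2 h3))
    obtain ⟨hnex, hcolx⟩ := hch x hxΛ
    have hmem := hcolx K hK hxK (interior U) (isOpen_interior.mem_nhds hxU)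
    haveI := hnex
    obtain ⟨g, hg⟩ := hmem.exists
    exact ⟨g, fun k hk => interior_subset (hg k hk)⟩
  have hgen : (Filter.generate fam).NeBot := by
    rw [Filter.generate_neBot_iff]
    intro t hts htf
    choose! Kf Uf hKc hKb hUn hseq using fun s (hs : s ∈ t) => hts hs
    have hKcomp : IsCompact (⋃ s ∈ t, Kf s) := htf.isCompact_biUnion hKc
    have hbK : b ∉ ⋃ s ∈ t, Kf s := by
      simp only [mem_iUnion, not_exists]
      exact fun s hs => hKb s hs
    have hUnn : (⋂ s ∈ t, Uf s) ∈ 𝓝 a := (Filter.biInter_mem htf).mpr hUn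
    obtain ⟨g, hg⟩ := key _ _ hKcomp hbK hUnn
    refine ⟨g, ?_⟩
    intro s hs
    rw [hseq s hs]
    intro k hk
    have hkin : k ∈ ⋃ s ∈ t, Kf s := mem_biUnion hs hk
    have := hg k hkin
    exact (mem_iInter₂.mp this) s hs
  refine ⟨b, Filter.generate fam, hgen, ?_⟩
  intro K hK hbK U hU
  have : S K U ∈ Filter.generate fam :=
    Filter.mem_generate_of_mem ⟨K, U, hK, hbK, hU, rfl⟩
  exact this

section Quot

variable {T : Type*} [TopologicalSpace T] [CompactSpace T] [T2Space T] {Λ : Set T}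

lemma lamRel_isClosed (hΛ : IsClosed Λ) :
    IsClosed {p : T × T | (lamSetoid Λ).r p.1 p.2} := by
  haveI hcs : CompactSpace ↥Λ := isCompact_iff_compactSpace.mp hΛ.isCompact
  have hrw : {p : T × T | (lamSetoid Λ).r p.1 p.2} =
      {p : T × T | p.1 = p.2} ∪
      {p : T × T | p.1 ∈ Λ ∧ p.2 ∈ Λ ∧
        connectedComponentIn Λ p.1 = connectedComponentIn Λ p.2} := by
    ext p; exact Iff.rfl
  have himg : {p : T × T | p.1 ∈ Λ ∧ p.2 ∈ Λ ∧
      connectedComponentIn Λ p.1 = connectedComponentIn Λ p.2}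
      = (fun z : ↥Λ × ↥Λ => ((z.1 : T), (z.2 : T))) ''
        {z : ↥Λ × ↥Λ | ConnectedComponents.mk z.1 = ConnectedComponents.mk z.2} := by
    ext ⟨x, y⟩
    constructor
    · rintro ⟨hx, hy, h⟩
      refine ⟨⟨⟨x, hx⟩, ⟨y, hy⟩⟩, ?_, rfl⟩
      simp only [mem_setOf_eq, ConnectedComponents.coe_eq_coe]
      rw [connectedComponentIn_eq_image hx, connectedComponentIn_eq_image hy] at h
      exact (Set.image_injective.mpr Subtype.coe_injective) h
    · rintro ⟨z, hz, heq⟩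
      have h1 : (z.1 : T) = x := congrArg Prod.fst heq
      have h2 : (z.2 : T) = y := congrArg Prod.snd heq
      subst h1; subst h2
      refine ⟨z.1.2, z.2.2, ?_⟩
      rw [connectedComponentIn_eq_image z.1.2, connectedComponentIn_eq_image z.2.2]
      exact congrArg (Subtype.val '' ·) (ConnectedComponents.coe_eq_coe.mp hz)
  rw [hrw, himg]
  have hcl : IsClosed {z : ↥Λ × ↥Λ | ConnectedComponents.mk z.1 = ConnectedComponents.mk z.2} :=
    isClosed_eq (ConnectedComponents.continuous_coe.comp continuous_fst)
      (ConnectedComponents.continuous_coe.comp continuous_snd)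
  exact (isClosed_eq continuous_fst continuous_snd).union
    (hcl.isCompact.image ((continuous_subtype_val.comp continuous_fst).prodMk
      (continuous_subtype_val.comp continuous_snd))).isClosed

lemma lamSat_isClosed (hΛ : IsClosed Λ) {C : Set T} (hC : IsClosed C) :
    IsClosed {y | ∃ x ∈ C, (lamSetoid Λ).r x y} := by
  have hrw : {y | ∃ x ∈ C, (lamSetoid Λ).r x y} =
      Prod.snd '' ({p : T × T | (lamSetoid Λ).r p.1 p.2} ∩ C ×ˢ (univ : Set T)) := by
    ext y
    constructor
    · rintro ⟨x, hxC, hr⟩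
      exact ⟨(x, y), ⟨hr, hxC, trivial⟩, rfl⟩
    · rintro ⟨⟨x, y'⟩, ⟨hr, hxC, -⟩, rfl⟩
      exact ⟨x, hxC, hr⟩
  rw [hrw]
  exact (((lamRel_isClosed hΛ).inter (hC.prod isClosed_univ)).isCompact.image
    continuous_snd).isClosed

lemma lamQuot_t2 (hΛ : IsClosed Λ) : T2Space (Quotient (lamSetoid Λ)) := by
  constructor
  intro p q hpq
  obtain ⟨x, rfl⟩ := Quotient.exists_rep p
  obtain ⟨y, rfl⟩ := Quotient.exists_rep q
  have htrans : ∀ {a b c : T}, (lamSetoid Λ).r a b → (lamSetoid Λ).r b c → (lamSetoid Λ).r a c :=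
    fun h1 h2 => (lamSetoid Λ).iseqv.trans h1 h2
  have hsymm : ∀ {a b : T}, (lamSetoid Λ).r a b → (lamSetoid Λ).r b a :=
    fun h => (lamSetoid Λ).iseqv.symm h
  have hsat : ∀ D : Set T, IsClosed D →
      IsClosed {z | ∃ w ∈ D, (lamSetoid Λ).r w z} := fun D hD => lamSat_isClosed hΛ hD
  have hclx : IsClosed {z | (lamSetoid Λ).r x z} := by
    have : {z | (lamSetoid Λ).r x z} = {z | ∃ w ∈ ({x} : Set T), (lamSetoid Λ).r w z} := by
      ext z; simp
    rw [this]; exact hsat _ isClosed_singleton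
  have hcly : IsClosed {z | (lamSetoid Λ).r y z} := by
    have : {z | (lamSetoid Λ).r y z} = {z | ∃ w ∈ ({y} : Set T), (lamSetoid Λ).r w z} := by
      ext z; simp
    rw [this]; exact hsat _ isClosed_singleton
  have hdisj : Disjoint {z | (lamSetoid Λ).r x z} {z | (lamSetoid Λ).r y z} := by
    rw [Set.disjoint_left]
    intro z hz hz'
    exact hpq (Quotient.sound (htrans hz (hsymm hz')))
  obtain ⟨U, V, hUo, hVo, hAU, hBV, hUV⟩ := normal_separation hclx hcly hdisj
  set satc : Set T → Set T := fun W => {z | ∃ w ∈ Wᶜ, (lamSetoid Λ).r w z}ᶜ with hsatc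
  have hsatlem : ∀ W : Set T, ∀ u z, u ∈ satc W → (lamSetoid Λ).r u z → z ∈ satc W := by
    intro W u z hu hr hmem
    obtain ⟨w, hw, hrwz⟩ := hmem
    exact hu ⟨w, hw, htrans hrwz (hsymm hr)⟩
  have hsub : ∀ W : Set T, satc W ⊆ W := by
    intro W u hu
    by_contra h
    exact hu ⟨u, h, (lamSetoid Λ).iseqv.refl u⟩
  have hopen : ∀ W : Set T, IsOpen W → IsOpen (satc W) :=
    fun W hW => (hsat _ hW.isClosed_compl).isOpen_compl
  have hxU : x ∈ satc U := by
    rintro ⟨w, hwUc, hrwx⟩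
    exact hwUc (hAU (hsymm hrwx))
  have hyV : y ∈ satc V := by
    rintro ⟨w, hwVc, hrwy⟩
    exact hwVc (hBV (hsymm hrwy))
  have hpre : ∀ W : Set T,
      Quotient.mk (lamSetoid Λ) ⁻¹' (Quotient.mk (lamSetoid Λ) '' satc W) = satc W := by
    intro W
    refine Subset.antisymm ?_ (subset_preimage_image _ _)
    rintro z ⟨u, hu, hq⟩
    exact hsatlem W u z hu (Quotient.exact hq)
  refine ⟨Quotient.mk _ '' satc U, Quotient.mk _ '' satc V, ?_, ?_,
    ⟨x, hxU, rfl⟩, ⟨y, hyV, rfl⟩, ?_⟩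
  · rw [← (@isQuotientMap_quotient_mk' T _ (lamSetoid Λ)).isOpen_preimage]
    show IsOpen (Quotient.mk (lamSetoid Λ) ⁻¹' (Quotient.mk (lamSetoid Λ) '' satc U))
    rw [hpre U]
    exact hopen U hUo
  · rw [← (@isQuotientMap_quotient_mk' T _ (lamSetoid Λ)).isOpen_preimage]
    show IsOpen (Quotient.mk (lamSetoid Λ) ⁻¹' (Quotient.mk (lamSetoid Λ) '' satc V))
    rw [hpre V]
    exact hopen V hVo
  · rw [Set.disjoint_left]
    rintro c ⟨u, hu, rfl⟩ ⟨v, hv, hq⟩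
    have hr : (lamSetoid Λ).r v u := Quotient.exact hq
    have : v ∈ satc U := hsatlem U u v hu (hsymm hr)
    exact Set.disjoint_left.mp hUV (hsub U this) (hsub V hv)

lemma lamQuot_totallyDisconnected (hΛ : IsClosed Λ) :
    IsTotallyDisconnected (Quotient.mk (lamSetoid Λ) '' Λ) := by
  haveI hcs : CompactSpace ↥Λ := isCompact_iff_compactSpace.mp hΛ.isCompact
  haveI := lamQuot_t2 hΛ
  haveI : CompactSpace (ConnectedComponents ↥Λ) := Quotient.compactSpace
  let g : ↥Λ → Quotient (lamSetoid Λ) := fun z => Quotient.mk _ (z : T)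
  have hg : ∀ z1 z2 : ↥Λ, connectedComponent z1 = connectedComponent z2 → g z1 = g z2 := by
    intro z1 z2 h
    refine Quotient.sound (Or.inr ⟨z1.2, z2.2, ?_⟩)
    rw [connectedComponentIn_eq_image z1.2, connectedComponentIn_eq_image z2.2]
    exact congrArg (Subtype.val '' ·) h
  let f : ConnectedComponents ↥Λ → Quotient (lamSetoid Λ) := Quotient.lift g hg
  have hfc : Continuous f :=
    Continuous.quotient_lift (continuous_quotient_mk'.comp continuous_subtype_val) hg
  have hinj : Function.Injective f := by
    intro p q
    refine Quotient.inductionOn₂ p q ?_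
    intro z1 z2 h
    have hr : (lamSetoid Λ).r (z1 : T) (z2 : T) := Quotient.exact h
    rcases hr with heq | ⟨-, -, hcc⟩
    · have : z1 = z2 := Subtype.ext heq
      rw [this]
    · refine Quotient.sound ?_
      rw [connectedComponentIn_eq_image z1.2, connectedComponentIn_eq_image z2.2] at hcc
      exact (Set.image_injective.mpr Subtype.coe_injective) hcc
  have hrange : f '' univ = Quotient.mk (lamSetoid Λ) '' Λ := by
    ext c
    constructor
    · rintro ⟨p, -, rfl⟩
      obtain ⟨z, rfl⟩ := Quotient.exists_rep p
      exact ⟨z, z.2, rfl⟩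
    · rintro ⟨x, hx, rfl⟩
      exact ⟨Quotient.mk _ ⟨x, hx⟩, trivial, rfl⟩
  have hce := hfc.isClosedEmbedding hinj
  have htd : IsTotallyDisconnected (f '' univ) :=
    hce.toIsEmbedding.isTotallyDisconnected_image.mpr
      (isTotallyDisconnected_of_totallyDisconnectedSpace univ)
  rwa [hrange] at htd

end Quot

/-- The quotient of `T` collapsing connected components of the limit set to points is a
compact Hausdorff space, and the image of the limit set in it is totally disconnected. -/
theorem quotient_compact_t2_totallyDisconnected {G T : Type*}
    [Group G] [TopologicalSpace G] [IsTopologicalGroup G] [LocallyCompactSpace G] [T2Space G]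
    [TopologicalSpace T] [CompactSpace T] [T2Space T]
    [MulAction G T] [ContinuousSMul G T]
    (hconv : IsConvergenceF (fun (g : G) (t : T) => g • t)) :
    CompactSpace (Quotient (lamSetoid (limitSetF (fun (g : G) (t : T) => g • t)))) ∧
      T2Space (Quotient (lamSetoid (limitSetF (fun (g : G) (t : T) => g • t)))) ∧
      IsTotallyDisconnected
        (Quotient.mk (lamSetoid (limitSetF (fun (g : G) (t : T) => g • t))) ''
          limitSetF (fun (g : G) (t : T) => g • t)) := by
  have hΛ : IsClosed (limitSetF (fun (g : G) (t : T) => g • t)) := limitSetF_isClosed _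
  exact ⟨Quotient.compactSpace, lamQuot_t2 hΛ, lamQuot_totallyDisconnected hΛ⟩
end

section
/- Let G be a locally compact Hausdorff group acting continuously with the convergence property on a compact Hausdorff space T with limit set Λ, and let T' = (T \ Λ) ⊔ Λ' be the quotient of T collapsing connected components of Λ to points. Then the induced action of G on T' is continuous, has the convergence property, and its limit set is Λ'. -/
open Filter Topology Set Pointwise

section QuotientActionAux
set_option linter.unusedSectionVars false

variable {G T : Type*} [Group G] [TopologicalSpace G] [IsTopologicalGroup G]
    [LocallyCompactSpace G] [T2Space G]
    [TopologicalSpace T] [CompactSpace T] [T2Space T]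
    [MulAction G T] [ContinuousSMul G T]

private abbrev Lam (G : Type*) (T : Type*) [TopologicalSpace T] [SMul G T] : Set T :=
  limitSetF (fun (g : G) (t : T) => g • t)

local notation "qq" => Quotient.mk (lamSetoid (Lam G T))

private lemma collapses_mono2 {X : Type*} [TopologicalSpace X] {act : G → X → X}
    {l l' : Filter G} {a b : X} (h : CollapsesF act l a b) (hle : l' ≤ l) :
    CollapsesF act l' a b :=
  fun K hK hb U hU => (h K hK hb U hU).filter_mono hle

private lemma smul_mem_lam' {a : T} (g : G) (ha : a ∈ Lam G T) : g • a ∈ Lam G T := by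
  obtain ⟨b, l, hl, hcol⟩ := ha
  refine ⟨b, l.map (fun h => g * h), hl.map _, ?_⟩
  intro K hK hb U hU
  have hU' : (fun t : T => g • t) ⁻¹' U ∈ 𝓝 a :=
    (continuous_const_smul g).continuousAt.preimage_mem_nhds hU
  rw [eventually_map]
  filter_upwards [hcol K hK hb _ hU'] with h hh k hk
  have := hh k hk
  simpa [mul_smul] using this

private lemma smul_notmem_lam' {a : T} (g : G) (ha : a ∉ Lam G T) : g • a ∉ Lam G T := by
  intro h
  exact ha (by simpa using smul_mem_lam' g⁻¹ h)

private lemma collapses_inv {X : Type*} [TopologicalSpace X] [CompactSpace X] [T2Space X]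
    (act : G → X → X) (hinv : ∀ g x, act g⁻¹ (act g x) = x)
    {l : Filter G} {a b : X} (h : CollapsesF act l a b) :
    CollapsesF act (l.map fun g => g⁻¹) b a := by
  intro K hK ha U hU
  obtain ⟨O, hOU, hO, hbO⟩ := mem_nhds_iff.mp hU
  have hC : IsCompact (Oᶜ) := hO.isClosed_compl.isCompact
  have hbC : b ∉ Oᶜ := by simpa using hbO
  have hKc : Kᶜ ∈ 𝓝 a := hK.isClosed.isOpen_compl.mem_nhds (by simpa using ha)
  rw [eventually_map]
  filter_upwards [h Oᶜ hC hbC Kᶜ hKc] with g hg k hk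
  by_contra hcon
  have h1 : act g⁻¹ k ∈ Oᶜ := fun hmem => hcon (hOU hmem)
  have h2 := hg _ h1
  rw [show act g (act g⁻¹ k) = k from by simpa using hinv g⁻¹ k] at h2
  exact h2 hk

private lemma repel_mem_lam' {a b : T} {l : Filter G} (hl : l.NeBot)
    (h : CollapsesF (fun (g : G) (t : T) => g • t) l a b) : b ∈ Lam G T :=
  ⟨a, l.map fun g => g⁻¹, hl.map _,
    collapses_inv (fun (g : G) (t : T) => g • t) (fun g x => inv_smul_smul g x) h⟩

private lemma lam_isClosed' : IsClosed (Lam G T) := by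
  rw [← closure_subset_iff_isClosed]
  intro a ha
  have hF : (𝓝 a ⊓ 𝓟 (Lam G T)).NeBot := mem_closure_iff_clusterPt.mp ha
  set U : Ultrafilter T := Ultrafilter.of (𝓝 a ⊓ 𝓟 (Lam G T)) with hUdef
  have hUle : (U : Filter T) ≤ 𝓝 a ⊓ 𝓟 (Lam G T) := Ultrafilter.of_le _
  have hch : ∀ x : T, ∃ (b : T) (lx : Filter G),
      x ∈ Lam G T → (lx.NeBot ∧ CollapsesF (fun (g : G) (t : T) => g • t) lx x b) := by
    intro x
    by_cases hx : x ∈ Lam G T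
    · obtain ⟨b, lx, h1, h2⟩ := hx
      exact ⟨b, lx, fun _ => ⟨h1, h2⟩⟩
    · exact ⟨x, ⊥, fun h => absurd h hx⟩
  choose bf lf hbl using hch
  have hblim : Tendsto bf (U : Filter T) (𝓝 ((U.map bf).lim)) := (U.map bf).le_nhds_lim
  refine ⟨(U.map bf).lim, (U : Filter T).bind lf, ?_, ?_⟩
  · rw [Filter.neBot_iff]
    intro hbot
    have : ∅ ∈ (U : Filter T).bind lf := by rw [hbot]; exact mem_bot
    rw [Filter.mem_bind] at this
    obtain ⟨t, htU, hts⟩ := this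
    have : (t ∩ Lam G T).Nonempty := by
      apply Ultrafilter.nonempty_of_mem
      exact inter_mem htU (hUle (Filter.mem_inf_of_right (mem_principal_self _)))
    obtain ⟨x, hxt, hxL⟩ := this
    have := (hbl x hxL).1
    rw [Filter.neBot_iff] at this
    apply this
    have h2 := hts x hxt
    exact bot_unique (by intro s _; exact Filter.mem_of_superset h2 (empty_subset s))
  · intro K hK hbK Uu hUu
    rw [Filter.eventually_bind]
    obtain ⟨O, hOU, hO, haO⟩ := mem_nhds_iff.mp hUu
    have h1 : O ∈ (U : Filter T) := hUle (Filter.mem_inf_of_left (hO.mem_nhds haO))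
    have h2 : Lam G T ∈ (U : Filter T) := hUle (Filter.mem_inf_of_right (mem_principal_self _))
    have h3 : bf ⁻¹' Kᶜ ∈ (U : Filter T) := hblim (hK.isClosed.isOpen_compl.mem_nhds hbK)
    filter_upwards [h1, h2, h3] with x hxO hxL hxb
    exact (hbl x hxL).2 K hK hxb Uu (mem_nhds_iff.mpr ⟨O, hOU, hO, hxO⟩)

/-- image of a connected component of Λ under g -/
private lemma comp_smul (g : G) {x : T} (hx : x ∈ Lam G T) :
    (fun t : T => g • t) '' connectedComponentIn (Lam G T) x
      = connectedComponentIn (Lam G T) (g • x) := by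
  have himg : ∀ (h : G), (fun t : T => h • t) '' (Lam G T) = Lam G T := by
    intro h
    apply subset_antisymm
    · rintro _ ⟨y, hy, rfl⟩; exact smul_mem_lam' h hy
    · intro y hy
      exact ⟨h⁻¹ • y, smul_mem_lam' h⁻¹ hy, by simp⟩
  apply subset_antisymm
  · have := (continuous_const_smul g : Continuous fun t : T => g • t).image_connectedComponentIn_subset hx
    rwa [himg g] at this
  · have h2 := (continuous_const_smul g⁻¹ : Continuous fun t : T => g⁻¹ • t).image_connectedComponentIn_subset
      (show g • x ∈ Lam G T from smul_mem_lam' g hx)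
    rw [himg g⁻¹, inv_smul_smul] at h2
    intro y hy
    refine ⟨g⁻¹ • y, h2 ⟨y, hy, rfl⟩, by simp⟩

private def actQ' (g : G) :
    Quotient (lamSetoid (Lam G T)) → Quotient (lamSetoid (Lam G T)) :=
  Quotient.lift (fun t => Quotient.mk (lamSetoid (Lam G T)) (g • t)) (by
    intro x y hxy
    apply Quotient.sound
    rcases hxy with rfl | ⟨hx, hy, hcomp⟩
    · exact Or.inl rfl
    · refine Or.inr ⟨smul_mem_lam' g hx, smul_mem_lam' g hy, ?_⟩
      rw [← comp_smul g hx, ← comp_smul g hy, hcomp])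

private lemma actQ_mk' (g : G) (t : T) :
    actQ' g (Quotient.mk (lamSetoid (Lam G T)) t) = Quotient.mk (lamSetoid (Lam G T)) (g • t) :=
  rfl

private lemma rel_isClosed' :
    IsClosed {p : T × T | (lamSetoid (Lam G T)).r p.1 p.2} := by
  haveI : CompactSpace (Lam G T) := isCompact_iff_compactSpace.mp
    (lam_isClosed' (G := G) (T := T)).isCompact
  have hD : IsClosed {u : (Lam G T) × (Lam G T) |
      connectedComponent u.1 = connectedComponent u.2} := by
    have : {u : (Lam G T) × (Lam G T) | connectedComponent u.1 = connectedComponent u.2}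
        = (fun u : (Lam G T) × (Lam G T) =>
            (ConnectedComponents.mk u.1, ConnectedComponents.mk u.2)) ⁻¹' (diagonal _) := by
      ext u
      simp only [mem_setOf_eq, mem_preimage, mem_diagonal_iff]
      exact ConnectedComponents.coe_eq_coe.symm
    rw [this]
    exact isClosed_diagonal.preimage
      ((ConnectedComponents.continuous_coe.comp continuous_fst).prodMk
        (ConnectedComponents.continuous_coe.comp continuous_snd))
  have hRc : IsClosed {p : T × T | p.1 ∈ Lam G T ∧ p.2 ∈ Lam G T ∧
      connectedComponentIn (Lam G T) p.1 = connectedComponentIn (Lam G T) p.2} := by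
    have heq : {p : T × T | p.1 ∈ Lam G T ∧ p.2 ∈ Lam G T ∧
        connectedComponentIn (Lam G T) p.1 = connectedComponentIn (Lam G T) p.2}
        = (Prod.map (Subtype.val : (Lam G T) → T) Subtype.val) ''
          {u : (Lam G T) × (Lam G T) | connectedComponent u.1 = connectedComponent u.2} := by
      ext ⟨x, y⟩
      constructor
      · rintro ⟨hx, hy, hcomp⟩
        refine ⟨(⟨x, hx⟩, ⟨y, hy⟩), ?_, rfl⟩
        have := hcomp
        rw [connectedComponentIn_eq_image hx, connectedComponentIn_eq_image hy] at this
        exact (image_eq_image Subtype.val_injective).mp this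
      · rintro ⟨⟨u, v⟩, huv, heq2⟩
        obtain ⟨hux, hvy⟩ : (u : T) = x ∧ (v : T) = y := Prod.ext_iff.mp heq2
        subst hux hvy
        refine ⟨u.2, v.2, ?_⟩
        rw [connectedComponentIn_eq_image u.2, connectedComponentIn_eq_image v.2]
        exact congrArg _ (by simpa using huv)
    rw [heq]
    have hcmp : IsCompact {u : (Lam G T) × (Lam G T) |
        connectedComponent u.1 = connectedComponent u.2} := hD.isCompact
    exact (hcmp.image ((continuous_subtype_val.comp continuous_fst).prodMk
      (continuous_subtype_val.comp continuous_snd))).isClosed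
  have : {p : T × T | (lamSetoid (Lam G T)).r p.1 p.2}
      = diagonal T ∪ {p : T × T | p.1 ∈ Lam G T ∧ p.2 ∈ Lam G T ∧
        connectedComponentIn (Lam G T) p.1 = connectedComponentIn (Lam G T) p.2} := by
    ext ⟨x, y⟩
    simp only [mem_setOf_eq, mem_union, mem_diagonal_iff]
    exact Iff.rfl
  rw [this]
  exact isClosed_diagonal.union hRc

private lemma qq_continuous2 : Continuous (Quotient.mk (lamSetoid (Lam G T))) :=
  continuous_quotient_mk'

private lemma class_isClosed (x : T) :
    IsClosed {z : T | (lamSetoid (Lam G T)).r z x} := by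
  have : {z : T | (lamSetoid (Lam G T)).r z x}
      = (fun z : T => (z, x)) ⁻¹' {p : T × T | (lamSetoid (Lam G T)).r p.1 p.2} := rfl
  rw [this]
  exact rel_isClosed'.preimage (continuous_id.prodMk continuous_const)

private lemma mem_class_iff {x z : T} :
    (lamSetoid (Lam G T)).r z x ↔ qq z = qq x := by
  constructor
  · intro h; exact Quotient.sound h
  · intro h; exact Quotient.exact h

private lemma qq_isClosedMap : IsClosedMap (Quotient.mk (lamSetoid (Lam G T))) := by
  intro C hC
  rw [← (@isQuotientMap_quotient_mk' T _ (lamSetoid (Lam G T))).isClosed_preimage]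
  have heq : (@Quotient.mk' T (lamSetoid (Lam G T))) ⁻¹' (qq '' C)
      = Prod.fst '' ({p : T × T | (lamSetoid (Lam G T)).r p.1 p.2} ∩ univ ×ˢ C) := by
    ext x
    simp only [mem_preimage, mem_image, mem_inter_iff, mem_prod, mem_univ, true_and,
      mem_setOf_eq]
    constructor
    · rintro ⟨c, hcC, hqe⟩
      exact ⟨(x, c), ⟨Quotient.exact (hqe.symm : qq x = qq c), hcC⟩, rfl⟩
    · rintro ⟨⟨x', c⟩, ⟨hr, hcC⟩, rfl⟩
      exact ⟨c, hcC, (Quotient.sound hr).symm ▸ rfl⟩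
  rw [heq]
  exact isClosedMap_fst_of_compactSpace _ ((rel_isClosed' (G := G) (T := T)).inter (isClosed_univ.prod hC))

private lemma tq_t2' : T2Space (Quotient (lamSetoid (Lam G T))) := by
  rw [t2Space_iff]
  intro x' y' hne
  obtain ⟨x, rfl⟩ := Quotient.exists_rep x'
  obtain ⟨y, rfl⟩ := Quotient.exists_rep y'
  set Cx := {z : T | (lamSetoid (Lam G T)).r z x} with hCx
  set Cy := {z : T | (lamSetoid (Lam G T)).r z y} with hCy
  have hdisj : Disjoint Cx Cy := by
    rw [disjoint_left]
    intro z hzx hzy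
    exact hne ((mem_class_iff.mp hzx).symm.trans (mem_class_iff.mp hzy))
  obtain ⟨U, V, hU, hV, hCxU, hCyV, hUV⟩ :=
    SeparatedNhds.of_isCompact_isCompact (class_isClosed x).isCompact
      (class_isClosed y).isCompact hdisj
  refine ⟨(qq '' Uᶜ)ᶜ, (qq '' Vᶜ)ᶜ, (qq_isClosedMap _ hU.isClosed_compl).isOpen_compl,
    (qq_isClosedMap _ hV.isClosed_compl).isOpen_compl, ?_, ?_, ?_⟩
  · rintro ⟨z, hz, hqe⟩
    exact hz (hCxU (mem_class_iff.mpr hqe))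
  · rintro ⟨z, hz, hqe⟩
    exact hz (hCyV (mem_class_iff.mpr hqe))
  · rw [disjoint_left]
    rintro w' hwU hwV
    obtain ⟨w, rfl⟩ := Quotient.exists_rep w'
    have hwU' : w ∈ U := by
      by_contra hc
      exact hwU ⟨w, hc, rfl⟩
    have hwV' : w ∈ V := by
      by_contra hc
      exact hwV ⟨w, hc, rfl⟩
    exact (disjoint_left.mp hUV) hwU' hwV'

private lemma actQ_continuous' :
    Continuous (fun p : G × Quotient (lamSetoid (Lam G T)) => actQ' p.1 p.2) := by
  rw [continuous_def]
  intro O' hO'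
  rw [isOpen_iff_mem_nhds]
  rintro ⟨g₀, x'⟩ hmem
  obtain ⟨x, rfl⟩ := Quotient.exists_rep x'
  set O : Set T := qq ⁻¹' O' with hOdef
  have hO : IsOpen O := hO'.preimage qq_continuous2
  have hPopen : IsOpen ((fun p : G × T => p.1 • p.2) ⁻¹' O) := hO.preimage continuous_smul
  -- fiber
  set Fx := {z : T | (lamSetoid (Lam G T)).r z x} with hFx
  have hFxc : IsCompact Fx := (class_isClosed x).isCompact
  have hsub : {g₀} ×ˢ Fx ⊆ (fun p : G × T => p.1 • p.2) ⁻¹' O := by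
    rintro ⟨g, z⟩ ⟨hg, hz⟩
    rw [mem_singleton_iff] at hg
    subst hg
    have : qq z = qq x := mem_class_iff.mp hz
    show qq (g • z) ∈ O'
    rw [← actQ_mk', this]
    exact hmem
  obtain ⟨u, v, hu, hv, hgu, hFv, huv⟩ :=
    generalized_tube_lemma isCompact_singleton hFxc hPopen hsub
  obtain ⟨N, hNc, hgN, hNu⟩ := exists_compact_subset hu (hgu rfl)
  set A := {y : T | ∀ h ∈ N, h • y ∈ O} with hA
  have hAopen : IsOpen A := by
    rw [isOpen_iff_mem_nhds]
    intro y₀ hy₀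
    have hsub2 : N ×ˢ ({y₀} : Set T) ⊆ (fun p : G × T => p.1 • p.2) ⁻¹' O := by
      rintro ⟨h, z⟩ ⟨hh, hz⟩
      rw [mem_singleton_iff] at hz
      subst hz
      exact hy₀ h hh
    obtain ⟨u₂, v₂, hu₂, hv₂, hNu₂, hyv₂, huv₂⟩ :=
      generalized_tube_lemma hNc isCompact_singleton hPopen hsub2
    refine Filter.mem_of_superset (hv₂.mem_nhds (hyv₂ rfl)) ?_
    intro y hy h hh
    exact huv₂ (mk_mem_prod (hNu₂ hh) hy)
  set W' := (qq '' Aᶜ)ᶜ with hW'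
  have hW'open : IsOpen W' := (qq_isClosedMap _ hAopen.isClosed_compl).isOpen_compl
  have hxW' : qq x ∈ W' := by
    rintro ⟨z, hz, hqe⟩
    apply hz
    intro h hh
    have hzF : z ∈ Fx := mem_class_iff.mpr hqe
    exact huv (mk_mem_prod (hNu hh) (hFv hzF))
  refine Filter.mem_of_superset (prod_mem_nhds (mem_interior_iff_mem_nhds.mp hgN) (hW'open.mem_nhds hxW')) ?_
  rintro ⟨h, y'⟩ ⟨hh, hyW⟩
  obtain ⟨y, rfl⟩ := Quotient.exists_rep y'
  have hyA : y ∈ A := by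
    by_contra hc
    exact hyW ⟨y, hc, rfl⟩
  show actQ' h (qq y) ∈ O'
  rw [actQ_mk']
  exact hyA h hh

private lemma collapses_transfer2 {l : Filter G} {a b : T}
    (h : CollapsesF (fun (g : G) (t : T) => g • t) l a b) :
    CollapsesF (actQ' (G := G) (T := T)) l (qq a) (qq b) := by
  haveI : T2Space (Quotient (lamSetoid (Lam G T))) := tq_t2'
  intro K' hK' hb U' hU'
  have hK : IsCompact (qq ⁻¹' K') := (hK'.isClosed.preimage qq_continuous2).isCompact
  have hbK : b ∉ qq ⁻¹' K' := fun hc => hb hc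
  have hUa : qq ⁻¹' U' ∈ 𝓝 a := qq_continuous2.continuousAt.preimage_mem_nhds hU'
  filter_upwards [h _ hK hbK _ hUa] with g hg k' hk'
  obtain ⟨k, rfl⟩ := Quotient.exists_rep k'
  rw [actQ_mk']
  exact hg k hk'

end QuotientActionAux

/-- The induced action of `G` on the quotient `T'` collapsing connected components of the
limit set is continuous, has the convergence property, and its limit set is `Λ'`. -/
theorem quotient_action_convergence {G T : Type*}
    [Group G] [TopologicalSpace G] [IsTopologicalGroup G] [LocallyCompactSpace G] [T2Space G]
    [TopologicalSpace T] [CompactSpace T] [T2Space T]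
    [MulAction G T] [ContinuousSMul G T]
    (hconv : IsConvergenceF (fun (g : G) (t : T) => g • t)) :
    ∃ act' : G → Quotient (lamSetoid (limitSetF (fun (g : G) (t : T) => g • t)))
        → Quotient (lamSetoid (limitSetF (fun (g : G) (t : T) => g • t))),
      (∀ (g : G) (t : T),
        act' g (Quotient.mk (lamSetoid (limitSetF (fun (g : G) (t : T) => g • t))) t)
          = Quotient.mk (lamSetoid (limitSetF (fun (g : G) (t : T) => g • t))) (g • t)) ∧
      Continuous (fun p : G × Quotient (lamSetoid (limitSetF (fun (g : G) (t : T) => g • t)))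
        => act' p.1 p.2) ∧
      IsConvergenceF act' ∧
      limitSetF act'
        = Quotient.mk (lamSetoid (limitSetF (fun (g : G) (t : T) => g • t))) ''
            limitSetF (fun (g : G) (t : T) => g • t) := by

  classical
  haveI : T2Space (Quotient (lamSetoid (Lam G T))) := tq_t2'
  refine ⟨actQ', fun g t => actQ_mk' g t, actQ_continuous', ?_, ?_⟩
  · -- IsConvergenceF actQ'
    intro l hl hnc
    obtain ⟨l', hle, hl', a, b, hcol⟩ := hconv l hl hnc
    exact ⟨l', hle, hl', _, _, collapses_transfer2 hcol⟩
  · -- limit set equality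
    apply subset_antisymm
    · -- hard direction
      rintro a' ⟨b', l, hl, h⟩
      by_cases hex : ∃ k' ∈ (Quotient.mk (lamSetoid (Lam G T))) '' Lam G T, k' ≠ b'
      · obtain ⟨k', hk'mem, hkb⟩ := hex
        have hclosed : IsClosed ((Quotient.mk (lamSetoid (Lam G T))) '' Lam G T) :=
          ((lam_isClosed' (G := G) (T := T)).isCompact.image qq_continuous2).isClosed
        have hmem : a' ∈ closure ((Quotient.mk (lamSetoid (Lam G T))) '' Lam G T) := by
          rw [mem_closure_iff_nhds]
          intro U' hU'
          have h1 := h {k'} isCompact_singleton (by simpa using hkb.symm) U' hU'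
          obtain ⟨g, hg⟩ := h1.exists
          refine ⟨actQ' g k', hg k' rfl, ?_⟩
          obtain ⟨x, hxΛ, rfl⟩ := hk'mem
          rw [actQ_mk']
          exact ⟨g • x, smul_mem_lam' g hxΛ, rfl⟩
        rwa [hclosed.closure_eq] at hmem
      · by_cases hLe : Lam G T = ∅
        · exfalso
          have hinj : Function.Injective (Quotient.mk (lamSetoid (Lam G T))) := by
            intro x y hxy
            rcases Quotient.exact hxy with heq | ⟨hx, -, -⟩
            · exact heq
            · rw [hLe] at hx; exact absurd hx (notMem_empty _)
          have hopen : ∀ U : Set T, IsOpen U →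
              IsOpen ((Quotient.mk (lamSetoid (Lam G T))) '' U) := by
            intro U hU
            rw [← (@isQuotientMap_quotient_mk' T _ (lamSetoid (Lam G T))).isOpen_preimage]
            have : (@Quotient.mk' T (lamSetoid (Lam G T))) ⁻¹'
                ((Quotient.mk (lamSetoid (Lam G T))) '' U) = U :=
              preimage_image_eq U hinj
            rw [this]
            exact hU
          have hout : Quotient.out a' ∈ Lam G T := by
            refine ⟨Quotient.out b', l, hl, ?_⟩
            intro K hK hb U hU
            have hbK : b' ∉ (Quotient.mk (lamSetoid (Lam G T))) '' K := by
              rintro ⟨k, hkK, hke⟩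
              rw [← Quotient.out_eq b'] at hke
              exact hb ((hinj hke) ▸ hkK)
            have hU' : (Quotient.mk (lamSetoid (Lam G T))) '' U ∈ 𝓝 a' := by
              obtain ⟨O, hOU, hO, haO⟩ := mem_nhds_iff.mp hU
              refine mem_nhds_iff.mpr ⟨_, image_mono hOU, hopen O hO, ?_⟩
              rw [← Quotient.out_eq a']
              exact ⟨_, haO, rfl⟩
            filter_upwards [h _ (hK.image qq_continuous2) hbK _ hU'] with g hg k hk
            have h2 := hg (Quotient.mk (lamSetoid (Lam G T)) k) ⟨k, hk, rfl⟩
            rw [actQ_mk'] at h2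
            obtain ⟨u, huU, hue⟩ := h2
            rwa [← hinj hue]
          rw [hLe] at hout
          exact absurd hout (notMem_empty _)
        · push_neg at hex
          have hQb : ∀ x ∈ Lam G T, (Quotient.mk (lamSetoid (Lam G T))) x = b' :=
            fun x hx => hex _ ⟨x, hx, rfl⟩
          obtain ⟨a₁, ha₁⟩ := nonempty_iff_ne_empty.mpr hLe
          suffices hab : a' = b' by
            exact ⟨a₁, ha₁, (hQb a₁ ha₁).trans hab.symm⟩
          by_contra hab
          by_cases hcl : ∃ g₀ : G, ClusterPt g₀ l
          · obtain ⟨g₀, hg₀⟩ := hcl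
            haveI hne : (𝓝 g₀ ⊓ l).NeBot := hg₀
            have hkey : ∀ k', k' ≠ b' → actQ' g₀ k' = a' := by
              intro k' hk'
              have htd : Tendsto (fun g : G => actQ' g k') (𝓝 g₀ ⊓ l)
                  (𝓝 (actQ' g₀ k')) := by
                have hc : Continuous (fun g : G => actQ' (G := G) (T := T) g k') :=
                  actQ_continuous'.comp (continuous_id.prodMk continuous_const)
                exact (hc.tendsto g₀).mono_left inf_le_left
              by_contra hcne
              obtain ⟨C, hCmem, hCcl, hCsub⟩ := exists_mem_nhds_isClosed_subset
                (show ({actQ' g₀ k'}ᶜ : Set _) ∈ 𝓝 a' from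
                  isClosed_singleton.isOpen_compl.mem_nhds (by
                    simpa using fun he => hcne he.symm))
              have hev : ∀ᶠ g in 𝓝 g₀ ⊓ l, actQ' g k' ∈ C :=
                ((h {k'} isCompact_singleton (by simpa using hk'.symm) C hCmem).mono
                  (fun g hg => hg k' rfl)).filter_mono inf_le_right
              have hmc : actQ' g₀ k' ∈ closure C := mem_closure_of_tendsto htd hev
              rw [hCcl.closure_eq] at hmc
              exact (hCsub hmc) rfl
            have hinj : Function.Injective (actQ' (G := G) (T := T) g₀) := by
              have hinv : ∀ y', actQ' g₀⁻¹ (actQ' (G := G) (T := T) g₀ y') = y' := by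
                intro y'; obtain ⟨y, rfl⟩ := Quotient.exists_rep y'
                rw [actQ_mk', actQ_mk', inv_smul_smul]
              intro u v huv
              rw [← hinv u, huv, hinv v]
            have honly : ∀ y', y' ≠ b' → y' = a' := by
              intro y' hy'
              exact hinj ((hkey y' hy').trans (hkey a' hab).symm)
            have htnot : Quotient.out a' ∉ Lam G T := fun hc =>
              hab (by rw [← Quotient.out_eq a']; exact hQb _ hc)
            have hclassb : ∀ z : T, (Quotient.mk (lamSetoid (Lam G T))) z = b' →
                z ∈ Lam G T := by
              intro z hz
              have hzz : (Quotient.mk (lamSetoid (Lam G T))) z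
                  = (Quotient.mk (lamSetoid (Lam G T))) a₁ := hz.trans (hQb a₁ ha₁).symm
              rcases Quotient.exact hzz with heq | ⟨hzΛ, -, -⟩
              · rw [heq]; exact ha₁
              · exact hzΛ
            have hfix : ∀ g : G, g • (Quotient.out a') = Quotient.out a' := by
              intro g
              have h1 : g • Quotient.out a' ∉ Lam G T := smul_notmem_lam' g htnot
              have h2 : (Quotient.mk (lamSetoid (Lam G T))) (g • Quotient.out a') ≠ b' :=
                fun hc => h1 (hclassb _ hc)
              have h3 := honly _ h2
              have h4 : (Quotient.mk (lamSetoid (Lam G T))) (g • Quotient.out a')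
                  = (Quotient.mk (lamSetoid (Lam G T))) (Quotient.out a') :=
                h3.trans (Quotient.out_eq a').symm
              rcases Quotient.exact h4 with heq | ⟨-, hoΛ, -⟩
              · exact heq
              · exact absurd hoΛ htnot
            obtain ⟨b₁, l₁, hl₁, hcol₁⟩ := id ha₁
            have hb₁ : b₁ ∈ Lam G T := repel_mem_lam' hl₁ hcol₁
            have hKb : b₁ ∉ ({Quotient.out a'} : Set T) := by
              intro hc
              rw [mem_singleton_iff] at hc
              rw [hc] at hb₁
              exact htnot hb₁
            have hmc2 : a₁ ∈ closure ({Quotient.out a'} : Set T) := by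
              rw [mem_closure_iff_nhds]
              intro U hU
              obtain ⟨g, hg⟩ := (hcol₁ _ isCompact_singleton hKb U hU).exists
              have hgu : g • Quotient.out a' ∈ U := hg _ rfl
              rw [hfix g] at hgu
              exact ⟨Quotient.out a', hgu, rfl⟩
            rw [isClosed_singleton.closure_eq, mem_singleton_iff] at hmc2
            rw [hmc2] at ha₁
            exact htnot ha₁
          · push_neg at hcl
            obtain ⟨l'', hle, hl'', a₀, b₀, hcol₀⟩ := hconv l hl hcl
            have ha₀ : a₀ ∈ Lam G T := ⟨b₀, l'', hl'', hcol₀⟩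
            have hb₀ : b₀ ∈ Lam G T := repel_mem_lam' hl'' hcol₀
            have htr := collapses_transfer2 hcol₀
            rw [hQb a₀ ha₀, hQb b₀ hb₀] at htr
            have hba' : b' ∉ ({a'} : Set (Quotient (lamSetoid (Lam G T)))) := by
              simpa using fun he => hab he.symm
            have hA : Tendsto (fun g : G => actQ' g a') l'' (𝓝 a') := by
              rw [Filter.tendsto_def]
              intro s hs
              exact ((collapses_mono2 h hle) {a'} isCompact_singleton hba' s hs).mono
                fun g hg => hg a' rfl
            have hB : Tendsto (fun g : G => actQ' g a') l'' (𝓝 b') := by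
              rw [Filter.tendsto_def]
              intro s hs
              exact (htr {a'} isCompact_singleton hba' s hs).mono fun g hg => hg a' rfl
            exact hab (tendsto_nhds_unique hA hB)
    · -- easy direction
      rintro _ ⟨a, ⟨b, l, hl, hcol⟩, rfl⟩
      exact ⟨_, l, hl, collapses_transfer2 hcol⟩
end

section
/- Let G be a locally compact Hausdorff group acting with the convergence property on a compact Hausdorff space T with |T| ≥ 3. Define a topology on X = G ⊔ T by declaring P ⊆ X closed iff P ∩ G is closed in G, P ∩ T is closed in T, and every attractor point in T of a net on P ∩ G belongs to P ∩ T. Then X with this topology is a compact Hausdorff space in which G is open and dense in G ∪ Λ, T is closed, and the subspace topologies on G and T agree with their original topologies. -/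
open Filter Topology Set Pointwise

/-- The set of attractor points of a subset `H ⊆ G` in `T`: points `u` such that some
net on `H` collapses to `u` except at some `v`. -/
def attractorPtsF {G T : Type*} [TopologicalSpace T] (act : G → T → T) (H : Set G) : Set T :=
  {u | ∃ v : T, ∃ l : Filter G, l.NeBot ∧ l ≤ Filter.principal H ∧ CollapsesF act l u v}

section Aux

variable {G T : Type*}

lemma CollapsesF.mono [TopologicalSpace T] {act : G → T → T} {l l' : Filter G} {a b : T}
    (h : CollapsesF act l a b) (hle : l' ≤ l) : CollapsesF act l' a b :=
  fun K hK hb U hU => (h K hK hb U hU).filter_mono hle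

lemma attractorPtsF_mono [TopologicalSpace T] (act : G → T → T) {H H' : Set G} (hsub : H ⊆ H') :
    attractorPtsF act H ⊆ attractorPtsF act H' := by
  rintro u ⟨v, l, h1, h2, h3⟩
  exact ⟨v, l, h1, h2.trans (principal_mono.2 hsub), h3⟩

lemma attractorPtsF_empty [TopologicalSpace T] (act : G → T → T) :
    attractorPtsF act (∅ : Set G) = ∅ := by
  ext u
  simp only [attractorPtsF, mem_setOf_eq, mem_empty_iff_false, iff_false]
  rintro ⟨v, l, h1, h2, -⟩
  rw [principal_empty, le_bot_iff] at h2
  exact h1.ne h2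

lemma attractorPtsF_union [TopologicalSpace T] (act : G → T → T) {A B : Set G} :
    attractorPtsF act (A ∪ B) ⊆ attractorPtsF act A ∪ attractorPtsF act B := by
  rintro u ⟨v, l, h1, h2, h3⟩
  by_cases hA : (l ⊓ 𝓟 A).NeBot
  · exact Or.inl ⟨v, l ⊓ 𝓟 A, hA, inf_le_right, h3.mono inf_le_left⟩
  · refine Or.inr ⟨v, l, h1, le_principal_iff.2 ?_, h3⟩
    have hAc : Aᶜ ∈ l := by rwa [not_neBot, inf_principal_eq_bot] at hA
    have hab : A ∪ B ∈ l := le_principal_iff.1 h2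
    filter_upwards [hab, hAc] with x hx hx2
    rcases hx with h | h
    · exact absurd h hx2
    · exact h

/-- From `3 ≤ |T|`, two distinct points different from a given point. -/
lemma exists_pair_ne_of_three_le {T : Type*} (hT : 3 ≤ (Set.univ : Set T).encard)
    (b : T) : ∃ k₁ k₂ : T, k₁ ≠ k₂ ∧ k₁ ≠ b ∧ k₂ ≠ b := by
  obtain ⟨s, -, hs⟩ := Set.exists_subset_encard_eq hT
  obtain ⟨x, y, z, hxy, hxz, hyz, rfl⟩ := Set.encard_eq_three.1 hs
  by_cases hbx : x = b
  · subst hbx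
    exact ⟨y, z, hyz, hxy.symm, hxz.symm⟩
  · by_cases hby : y = b
    · subst hby
      exact ⟨x, z, hxz, hbx, hyz.symm⟩
    · exact ⟨x, y, hxy, hbx, hby⟩

variable [Group G] [TopologicalSpace G] [TopologicalSpace T] [T2Space T]
  [MulAction G T] [ContinuousSMul G T]

/-- A collapsing filter has no cluster point in `G`. -/
lemma collapsesF_noClusterPt (hT : 3 ≤ (Set.univ : Set T).encard)
    {l : Filter G} (hl : l.NeBot) {a b : T}
    (hc : CollapsesF (fun (g : G) (t : T) => g • t) l a b) (g : G) : ¬ ClusterPt g l := by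
  intro hcl
  obtain ⟨k₁, k₂, hk12, hk1b, hk2b⟩ := exists_pair_ne_of_three_le hT b
  haveI hne : (𝓝 g ⊓ l).NeBot := hcl
  have key : ∀ k : T, k ≠ b → g • k = a := by
    intro k hk
    have h1 : Tendsto (fun h : G => h • k) (𝓝 g ⊓ l) (𝓝 (g • k)) :=
      ((continuous_id.smul continuous_const).tendsto g).mono_left inf_le_left
    have h2 : Tendsto (fun h : G => h • k) (𝓝 g ⊓ l) (𝓝 a) := by
      rw [tendsto_def]
      intro U hU
      have hbk : b ∉ ({k} : Set T) := by
        intro h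
        exact hk (Set.mem_singleton_iff.1 h).symm
      have h' : ∀ᶠ h in 𝓝 g ⊓ l, ∀ x ∈ ({k} : Set T), h • x ∈ U :=
        (hc {k} isCompact_singleton hbk U hU).filter_mono inf_le_right
      exact Filter.mem_of_superset h' (fun h hh => hh k rfl)
    exact tendsto_nhds_unique h1 h2
  exact hk12 (smul_left_cancel g ((key k₁ hk1b).trans (key k₂ hk2b).symm))

/-- Attractor points of a compact subset of `G` are empty. -/
lemma attractorPtsF_of_isCompact (hT : 3 ≤ (Set.univ : Set T).encard)
    {C : Set G} (hC : IsCompact C) :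
    attractorPtsF (fun (g : G) (t : T) => g • t) C = ∅ := by
  rw [Set.eq_empty_iff_forall_notMem]
  rintro u ⟨v, l, h1, h2, h3⟩
  haveI := h1
  obtain ⟨x, -, hx⟩ := hC h2
  exact collapsesF_noClusterPt hT h1 h3 x hx

end Aux

section LimitClosed

variable {G T : Type*} [TopologicalSpace T] [CompactSpace T] [T2Space T]

/-- The limit set is closed. -/
lemma isClosed_limitSetF (act : G → T → T) : IsClosed (limitSetF act) := by
  rw [← closure_subset_iff_isClosed]
  intro a ha
  rw [mem_closure_iff_clusterPt] at ha
  haveI : (𝓝 a ⊓ 𝓟 (limitSetF act)).NeBot := ha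
  obtain ⟨𝒰, h𝒰⟩ := Filter.exists_ultrafilter_le (𝓝 a ⊓ 𝓟 (limitSetF act))
  have hΛ : limitSetF act ∈ 𝒰 := le_principal_iff.1 (h𝒰.trans inf_le_right)
  have hA : (𝒰 : Filter T) ≤ 𝓝 a := h𝒰.trans inf_le_left
  have hch : ∀ x ∈ limitSetF act, ∃ (b : T) (l : Filter G), l.NeBot ∧ CollapsesF act l x b :=
    fun x hx => hx
  choose! bfun lfun hne hcol using hch
  obtain ⟨b, -, hb⟩ := isCompact_univ.ultrafilter_le_nhds (𝒰.map bfun)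
    (by simp [le_principal_iff])
  set L : Filter G := Filter.bind ↑𝒰 lfun with hLdef
  have hLne : L.NeBot := by
    rw [Filter.neBot_iff]
    intro hbot
    have h0 : (∅ : Set G) ∈ L := by rw [hbot]; exact Filter.mem_bot
    rw [Filter.mem_bind'] at h0
    obtain ⟨x, hx1, hx2⟩ := Filter.nonempty_of_mem (Filter.inter_mem h0 hΛ)
    exact (hne x hx2).ne (Filter.empty_mem_iff_bot.1 hx1)
  refine ⟨b, L, hLne, ?_⟩
  intro K hK hbK U hU
  set V := interior U with hV
  have haV : a ∈ V := mem_interior_iff_mem_nhds.2 hU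
  have hKc : Kᶜ ∈ 𝓝 b := hK.isClosed.isOpen_compl.mem_nhds hbK
  obtain ⟨C, hCnb, hCc, hCK⟩ := exists_mem_nhds_isClosed_subset hKc
  have hbint : b ∈ interior C := mem_interior_iff_mem_nhds.2 hCnb
  have hK'cpt : IsCompact ((interior C)ᶜ) := isOpen_interior.isClosed_compl.isCompact
  have hKK' : K ⊆ (interior C)ᶜ := by
    intro k hk hkint
    exact (hCK (interior_subset hkint)) hk
  have hEV : V ∈ 𝒰 := hA (isOpen_interior.mem_nhds haV)
  have hEb : bfun ⁻¹' (interior C) ∈ 𝒰 := by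
    have := hb (isOpen_interior.mem_nhds hbint)
    rwa [Ultrafilter.coe_map, Filter.mem_map] at this
  show {g : G | ∀ k ∈ K, act g k ∈ U} ∈ L
  rw [Filter.mem_bind']
  refine Filter.mem_of_superset (Filter.inter_mem (Filter.inter_mem hΛ hEV) hEb) ?_
  rintro x ⟨⟨hxΛ, hxV⟩, hxb⟩
  have hx := hcol x hxΛ ((interior C)ᶜ) hK'cpt (fun h => h hxb) V
    (isOpen_interior.mem_nhds hxV)
  refine Filter.mem_of_superset hx ?_
  intro g hg k hk
  exact interior_subset (hg k (hKK' hk))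

end LimitClosed

section Topology

variable {G T : Type*} [TopologicalSpace G] [TopologicalSpace T]

/-- The family of closed sets of the attractor sum. -/
def attractorClosedSets (act : G → T → T) : Set (Set (G ⊕ T)) :=
  {P | IsClosed (Sum.inl ⁻¹' P : Set G) ∧ IsClosed (Sum.inr ⁻¹' P : Set T) ∧
    attractorPtsF act (Sum.inl ⁻¹' P) ⊆ Sum.inr ⁻¹' P}

/-- The attractor-sum topology. -/
def attractorTop (act : G → T → T) : TopologicalSpace (G ⊕ T) :=
  TopologicalSpace.ofClosed (attractorClosedSets act)
    (by
      refine ⟨by simp, by simp, ?_⟩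
      rw [Set.preimage_empty, Set.preimage_empty, attractorPtsF_empty])
    (by
      intro A hA
      refine ⟨?_, ?_, ?_⟩
      · rw [Set.preimage_sInter]
        exact isClosed_biInter fun P hP => (hA hP).1
      · rw [Set.preimage_sInter]
        exact isClosed_biInter fun P hP => (hA hP).2.1
      · intro u hu
        rw [Set.preimage_sInter, Set.mem_iInter₂]
        intro P hP
        exact (hA hP).2.2 (attractorPtsF_mono _
          (Set.preimage_mono (Set.sInter_subset_of_mem hP)) hu))
    (by
      rintro P ⟨h1, h2, h3⟩ Q ⟨h4, h5, h6⟩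
      refine ⟨?_, ?_, ?_⟩
      · rw [Set.preimage_union]; exact h1.union h4
      · rw [Set.preimage_union]; exact h2.union h5
      · rw [Set.preimage_union, Set.preimage_union]
        intro u hu
        rcases attractorPtsF_union _ hu with h | h
        · exact Or.inl (h3 h)
        · exact Or.inr (h6 h))

lemma isOpen_attractorTop_iff (act : G → T → T) {P : Set (G ⊕ T)} :
    IsOpen[attractorTop act] P ↔ Pᶜ ∈ attractorClosedSets act := Iff.rfl

lemma isClosed_attractorTop_iff (act : G → T → T) {P : Set (G ⊕ T)} :
    IsClosed[attractorTop act] P ↔ P ∈ attractorClosedSets act := by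
  letI := attractorTop act
  rw [← isOpen_compl_iff, isOpen_attractorTop_iff (act := act), compl_compl]

end Topology

/-- The attractor sum: on `X = G ⊕ T` there is a (compact Hausdorff) topology whose closed
sets `P` are exactly those with `P ∩ G` closed in `G`, `P ∩ T` closed in `T` and all attractor
points of nets on `P ∩ G` in `P ∩ T`; in it `G` is open with closure `G ∪ Λ`, `T` is closed,
and `G` and `T` carry their original topologies. -/
theorem attractorSum_exists {G T : Type*}
    [Group G] [TopologicalSpace G] [IsTopologicalGroup G] [LocallyCompactSpace G] [T2Space G]
    [TopologicalSpace T] [CompactSpace T] [T2Space T]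
    [MulAction G T] [ContinuousSMul G T]
    (hconv : IsConvergenceF (fun (g : G) (t : T) => g • t))
    (hT : 3 ≤ (Set.univ : Set T).encard) :
    ∃ τ : TopologicalSpace (G ⊕ T),
      (∀ P : Set (G ⊕ T), IsClosed[τ] P ↔
        IsClosed (Sum.inl ⁻¹' P : Set G) ∧ IsClosed (Sum.inr ⁻¹' P : Set T) ∧
          attractorPtsF (fun (g : G) (t : T) => g • t) (Sum.inl ⁻¹' P) ⊆ Sum.inr ⁻¹' P) ∧
      @CompactSpace (G ⊕ T) τ ∧ @T2Space (G ⊕ T) τ ∧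
      IsOpen[τ] (Set.range (Sum.inl : G → G ⊕ T)) ∧
      IsClosed[τ] (Set.range (Sum.inr : T → G ⊕ T)) ∧
      @closure (G ⊕ T) τ (Set.range Sum.inl)
        = Set.range Sum.inl ∪ Sum.inr '' limitSetF (fun (g : G) (t : T) => g • t) ∧
      @Topology.IsEmbedding G (G ⊕ T) _ τ Sum.inl ∧
      @Topology.IsEmbedding T (G ⊕ T) _ τ Sum.inr := by
  classical
  set act : G → T → T := fun g t => g • t with hact
  letI τ : TopologicalSpace (G ⊕ T) := attractorTop act
  -- preimage computations
  have pre_lr : ∀ s : Set T, (Sum.inl ⁻¹' (Sum.inr '' s) : Set G) = ∅ := by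
    intro s; ext x; simp
  have pre_rl : ∀ s : Set G, (Sum.inr ⁻¹' (Sum.inl '' s) : Set T) = ∅ := by
    intro s; ext x; simp
  have pre_ll : ∀ s : Set G, ((Sum.inl : G → G ⊕ T) ⁻¹' ((Sum.inl : G → G ⊕ T) '' s)) = s :=
    fun s => Set.preimage_image_eq s Sum.inl_injective
  have pre_rr : ∀ s : Set T, ((Sum.inr : T → G ⊕ T) ⁻¹' ((Sum.inr : T → G ⊕ T) '' s)) = s :=
    fun s => Set.preimage_image_eq s Sum.inr_injective
  have hchar : ∀ P : Set (G ⊕ T), IsClosed[τ] P ↔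
      IsClosed (Sum.inl ⁻¹' P : Set G) ∧ IsClosed (Sum.inr ⁻¹' P : Set T) ∧
        attractorPtsF act (Sum.inl ⁻¹' P) ⊆ Sum.inr ⁻¹' P :=
    fun P => isClosed_attractorTop_iff act
  -- images of open subsets of G are open
  have hopen_inl : ∀ s : Set G, IsOpen s → IsOpen[τ] (Sum.inl '' s) := by
    intro s hs
    refine (isOpen_attractorTop_iff act).2 ⟨?_, ?_, ?_⟩
    · simp only [Set.preimage_compl, pre_ll]
      exact hs.isClosed_compl
    · simp only [Set.preimage_compl, pre_rl, Set.compl_empty]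
      exact isClosed_univ
    · simp only [Set.preimage_compl, pre_rl, Set.compl_empty]
      exact Set.subset_univ _
  -- images of compact subsets of G are closed
  have hclosed_inl : ∀ C : Set G, IsCompact C → IsClosed[τ] (Sum.inl '' C) := by
    intro C hC
    refine (isClosed_attractorTop_iff act).2 ⟨?_, ?_, ?_⟩
    · rw [pre_ll]; exact hC.isClosed
    · rw [pre_rl]; exact isClosed_empty
    · rw [pre_ll, pre_rl, attractorPtsF_of_isCompact hT hC]
  -- images of closed subsets of T are closed
  have hclosed_inr : ∀ C : Set T, IsClosed C → IsClosed[τ] (Sum.inr '' C) := by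
    intro C hC
    refine (isClosed_attractorTop_iff act).2 ⟨?_, ?_, ?_⟩
    · rw [pre_lr]; exact isClosed_empty
    · rw [pre_rr]; exact hC
    · rw [pre_lr, attractorPtsF_empty]; exact empty_subset _
  have hrange_inr : IsClosed[τ] (Set.range (Sum.inr : T → G ⊕ T)) := by
    rw [← Set.image_univ]; exact hclosed_inr _ isClosed_univ
  have hrange_inl : IsOpen[τ] (Set.range (Sum.inl : G → G ⊕ T)) := by
    refine (isOpen_attractorTop_iff act).2 ?_
    rw [Set.compl_range_inl, ← Set.image_univ]
    exact (isClosed_attractorTop_iff act).1 (hclosed_inr _ isClosed_univ)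
  have hcont_inl : @Continuous G (G ⊕ T) _ τ Sum.inl := by
    rw [continuous_iff_isClosed]
    exact fun s hs => ((hchar s).1 hs).1
  have hcont_inr : @Continuous T (G ⊕ T) _ τ Sum.inr := by
    rw [continuous_iff_isClosed]
    exact fun s hs => ((hchar s).1 hs).2.1
  refine ⟨τ, hchar, ?_, ?_, hrange_inl, hrange_inr, ?_, ?_, ?_⟩
  · -- CompactSpace
    refine ⟨?_⟩
    rw [isCompact_iff_ultrafilter_le_nhds]
    intro 𝒰 _
    rcases 𝒰.mem_or_compl_mem (Set.range (Sum.inl : G → G ⊕ T)) with hmem | hmem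
    · -- concentrated on G
      set 𝒱 : Ultrafilter G := 𝒰.comap Sum.inl_injective hmem with h𝒱
      have hcoe : (𝒱 : Filter G) = Filter.comap Sum.inl (𝒰 : Filter (G ⊕ T)) :=
        Ultrafilter.coe_comap _ _ _
      have hmap : (Filter.comap Sum.inl (𝒰 : Filter (G ⊕ T))).map Sum.inl = (𝒰 : Filter (G ⊕ T)) :=
        Filter.map_comap_of_mem hmem
      by_cases hcl : ∃ g : G, ClusterPt g (𝒱 : Filter G)
      · obtain ⟨g, hg⟩ := hcl
        have hle : (𝒱 : Filter G) ≤ 𝓝 g := Ultrafilter.clusterPt_iff.1 hg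
        refine ⟨Sum.inl g, Set.mem_univ _, ?_⟩
        calc (𝒰 : Filter (G ⊕ T)) = (Filter.comap Sum.inl (𝒰 : Filter (G ⊕ T))).map Sum.inl := hmap.symm
          _ ≤ (𝓝 g).map Sum.inl := by rw [← hcoe]; exact Filter.map_mono hle
          _ ≤ 𝓝 (Sum.inl g) := hcont_inl.tendsto g
      · push_neg at hcl
        obtain ⟨l', hl'le, hl'ne, a, bb, hcol⟩ := hconv (𝒱 : Filter G) 𝒱.neBot hcl
        refine ⟨Sum.inr a, Set.mem_univ _, ?_⟩
        rw [le_nhds_iff]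
        intro s hs hso
        by_contra hns
        have hsc : sᶜ ∈ 𝒰 := Ultrafilter.compl_mem_iff_notMem.2 hns
        have hclosed : IsClosed[τ] sᶜ := isClosed_compl_iff.2 hso
        have h3 := ((hchar sᶜ).1 hclosed).2.2
        have hmem' : (Sum.inl ⁻¹' sᶜ : Set G) ∈ l' := by
          apply hl'le
          rw [hcoe]
          exact Filter.preimage_mem_comap hsc
        exact h3 ⟨bb, l', hl'ne, le_principal_iff.2 hmem', hcol⟩ hs
    · -- concentrated on T
      rw [Set.compl_range_inl] at hmem
      set 𝒱 : Ultrafilter T := 𝒰.comap Sum.inr_injective hmem with h𝒱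
      have hcoe : (𝒱 : Filter T) = Filter.comap Sum.inr (𝒰 : Filter (G ⊕ T)) :=
        Ultrafilter.coe_comap _ _ _
      have hmap : (Filter.comap Sum.inr (𝒰 : Filter (G ⊕ T))).map Sum.inr = (𝒰 : Filter (G ⊕ T)) :=
        Filter.map_comap_of_mem hmem
      obtain ⟨t, -, ht⟩ := isCompact_univ.ultrafilter_le_nhds 𝒱 (by simp [le_principal_iff])
      refine ⟨Sum.inr t, Set.mem_univ _, ?_⟩
      calc (𝒰 : Filter (G ⊕ T)) = (Filter.comap Sum.inr (𝒰 : Filter (G ⊕ T))).map Sum.inr := hmap.symm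
        _ ≤ (𝓝 t).map Sum.inr := by rw [← hcoe]; exact Filter.map_mono ht
        _ ≤ 𝓝 (Sum.inr t) := hcont_inr.tendsto t
  · -- T2Space
    obtain ⟨s3, -, hs3⟩ := Set.exists_subset_encard_eq hT
    obtain ⟨p₁, p₂, p₃, hp12, hp13, hp23, rfl⟩ := Set.encard_eq_three.1 hs3
    have hOpenT : ∀ V : Set T, IsOpen V →
        IsOpen[τ] (Sum.inl '' {g : G | (g • p₁ ∈ V ∧ g • p₂ ∈ V) ∨ (g • p₁ ∈ V ∧ g • p₃ ∈ V) ∨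
          (g • p₂ ∈ V ∧ g • p₃ ∈ V)} ∪ Sum.inr '' V) := by
      intro V hV
      set H : Set G := {g : G | (g • p₁ ∈ V ∧ g • p₂ ∈ V) ∨ (g • p₁ ∈ V ∧ g • p₃ ∈ V) ∨
          (g • p₂ ∈ V ∧ g • p₃ ∈ V)} with hH
      have hHopen : IsOpen H := by
        have h1 : ∀ p : T, IsOpen {g : G | g • p ∈ V} := fun p =>
          hV.preimage (continuous_id.smul continuous_const)
        exact ((h1 p₁).inter (h1 p₂)).union
          (((h1 p₁).inter (h1 p₃)).union ((h1 p₂).inter (h1 p₃)))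
      have hpre_l : (Sum.inl ⁻¹' (Sum.inl '' H ∪ Sum.inr '' V)ᶜ : Set G) = Hᶜ := by
        rw [Set.preimage_compl, Set.preimage_union, pre_ll, pre_lr, Set.union_empty]
      have hpre_r : (Sum.inr ⁻¹' (Sum.inl '' H ∪ Sum.inr '' V)ᶜ : Set T) = Vᶜ := by
        rw [Set.preimage_compl, Set.preimage_union, pre_rr, pre_rl, Set.empty_union]
      refine (isOpen_attractorTop_iff act).2 ⟨?_, ?_, ?_⟩
      · rw [hpre_l]; exact hHopen.isClosed_compl
      · rw [hpre_r]; exact hV.isClosed_compl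
      · rw [hpre_l, hpre_r]
        rintro u ⟨v, l, hne, hle, hcol⟩ huV
        obtain ⟨x, y, hx, hy, hxyH⟩ : ∃ x y : T, x ≠ v ∧ y ≠ v ∧
            ∀ g : G, g • x ∈ V → g • y ∈ V → g ∈ H := by
          by_cases h1 : v = p₁
          · exact ⟨p₂, p₃, by rw [h1]; exact hp12.symm, by rw [h1]; exact hp13.symm,
              fun g hgx hgy => Or.inr (Or.inr ⟨hgx, hgy⟩)⟩
          · by_cases h2 : v = p₂
            · exact ⟨p₁, p₃, by rw [h2]; exact hp12, by rw [h2]; exact hp23.symm,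
                fun g hgx hgy => Or.inr (Or.inl ⟨hgx, hgy⟩)⟩
            · exact ⟨p₁, p₂, fun h => h1 h.symm, fun h => h2 h.symm,
                fun g hgx hgy => Or.inl ⟨hgx, hgy⟩⟩
        have hKcpt : IsCompact ({x, y} : Set T) :=
          ((Set.finite_singleton y).insert x).isCompact
        have hvK : v ∉ ({x, y} : Set T) := by
          simp only [Set.mem_insert_iff, Set.mem_singleton_iff]
          rintro (rfl | rfl)
          · exact hx rfl
          · exact hy rfl
        have hev := hcol {x, y} hKcpt hvK V (hV.mem_nhds huV)
        have hHc : ∀ᶠ g in l, g ∈ Hᶜ := le_principal_iff.1 hle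
        haveI := hne
        obtain ⟨g, hg1, hg2⟩ := (hev.and hHc).exists
        exact hg2 (hxyH g (hg1 x (Set.mem_insert x _)) (hg1 y (Set.mem_insert_of_mem _ rfl)))
    refine ⟨?_⟩
    intro x y hxy
    rcases x with g | t <;> rcases y with g' | t'
    · -- two points of G
      have hgg' : g ≠ g' := fun h => hxy (by rw [h])
      obtain ⟨C, hCnhds, hCsub, hCcpt⟩ :=
        local_compact_nhds (show ({g'}ᶜ : Set G) ∈ 𝓝 g from
          isOpen_compl_singleton.mem_nhds (by simpa using hgg'))
      refine ⟨Sum.inl '' interior C, (Sum.inl '' C)ᶜ, hopen_inl _ isOpen_interior,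
        (hclosed_inl C hCcpt).isOpen_compl, ?_, ?_, ?_⟩
      · exact ⟨g, mem_interior_iff_mem_nhds.2 hCnhds, rfl⟩
      · rintro ⟨z, hz, hzeq⟩
        exact hCsub ((Sum.inl_injective hzeq) ▸ hz) rfl
      · exact disjoint_compl_right.mono_left (Set.image_mono interior_subset)
    · -- a point of G and a point of T
      obtain ⟨C, hCcpt, hCnhds⟩ := exists_compact_mem_nhds g
      refine ⟨Sum.inl '' interior C, (Sum.inl '' C)ᶜ, hopen_inl _ isOpen_interior,
        (hclosed_inl C hCcpt).isOpen_compl, ?_, ?_, ?_⟩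
      · exact ⟨g, mem_interior_iff_mem_nhds.2 hCnhds, rfl⟩
      · rintro ⟨z, -, hzeq⟩
        simp at hzeq
      · exact disjoint_compl_right.mono_left (Set.image_mono interior_subset)
    · -- a point of T and a point of G
      obtain ⟨C, hCcpt, hCnhds⟩ := exists_compact_mem_nhds g'
      refine ⟨(Sum.inl '' C)ᶜ, Sum.inl '' interior C,
        (hclosed_inl C hCcpt).isOpen_compl, hopen_inl _ isOpen_interior, ?_, ?_, ?_⟩
      · rintro ⟨z, -, hzeq⟩
        simp at hzeq
      · exact ⟨g', mem_interior_iff_mem_nhds.2 hCnhds, rfl⟩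
      · exact (disjoint_compl_right.mono_left (Set.image_mono interior_subset)).symm
    · -- two points of T
      have htt' : t ≠ t' := fun h => hxy (by rw [h])
      obtain ⟨U', V', hU'open, hV'open, htU, htV, hUV⟩ := t2_separation htt'
      refine ⟨_, _, hOpenT U' hU'open, hOpenT V' hV'open,
        Or.inr ⟨t, htU, rfl⟩, Or.inr ⟨t', htV, rfl⟩, ?_⟩
      have hd := Set.disjoint_left.1 hUV
      rw [Set.disjoint_left]
      rintro z (⟨g, hg, rfl⟩ | ⟨w, hw, rfl⟩) hz2
      · rcases hz2 with ⟨g2, hg2, heq⟩ | ⟨w2, hw2, heq⟩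
        · rw [show g2 = g from Sum.inl_injective heq] at hg2
          rcases hg with ⟨ha1, ha2⟩ | ⟨ha1, ha2⟩ | ⟨ha1, ha2⟩ <;>
            rcases hg2 with ⟨hb1, hb2⟩ | ⟨hb1, hb2⟩ | ⟨hb1, hb2⟩ <;>
            first
              | exact hd ha1 hb1
              | exact hd ha1 hb2
              | exact hd ha2 hb1
              | exact hd ha2 hb2
        · simp at heq
      · rcases hz2 with ⟨g2, hg2, heq⟩ | ⟨w2, hw2, heq⟩
        · simp at heq
        · rw [show w2 = w from Sum.inr_injective heq] at hw2
          exact hd hw hw2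
  · -- closure of the copy of G
    have hΛclosed : IsClosed (limitSetF act) := isClosed_limitSetF act
    have hRHSclosed : IsClosed[τ] (Set.range Sum.inl ∪ Sum.inr '' limitSetF act) := by
      refine (isClosed_attractorTop_iff act).2 ⟨?_, ?_, ?_⟩
      · rw [Set.preimage_union, Set.preimage_range, pre_lr, Set.union_empty]
        exact isClosed_univ
      · have : (Sum.inr ⁻¹' (Set.range (Sum.inl : G → G ⊕ T)) : Set T) = ∅ := by
          ext w; simp
        rw [Set.preimage_union, this, pre_rr, Set.empty_union]
        exact hΛclosed
      · rintro u ⟨v, l, h1, -, h3⟩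
        exact Or.inr ⟨u, ⟨v, l, h1, h3⟩, rfl⟩
    refine subset_antisymm (closure_minimal Set.subset_union_left hRHSclosed)
      (Set.union_subset subset_closure ?_)
    rintro _ ⟨u, hu, rfl⟩
    have hcl : IsClosed[τ] (closure (Set.range (Sum.inl : G → G ⊕ T))) := isClosed_closure
    have h3 := ((hchar _).1 hcl).2.2
    have hpre : (Sum.inl ⁻¹' closure (Set.range (Sum.inl : G → G ⊕ T)) : Set G) = Set.univ := by
      apply Set.eq_univ_of_forall
      intro g
      exact subset_closure ⟨g, rfl⟩
    rw [hpre] at h3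
    obtain ⟨bb, l, hlne, hlcol⟩ := hu
    exact h3 ⟨bb, l, hlne, le_principal_iff.2 Filter.univ_mem, hlcol⟩
  · -- embedding of G
    refine ⟨⟨?_⟩, Sum.inl_injective⟩
    apply TopologicalSpace.ext_iff.2
    intro s
    constructor
    · intro hs
      exact isOpen_induced_iff.2 ⟨Sum.inl '' s, hopen_inl s hs, pre_ll s⟩
    · intro hs
      obtain ⟨t', ht', rfl⟩ := isOpen_induced_iff.1 hs
      have h1 := ((hchar t'ᶜ).1 ht'.isClosed_compl).1
      rw [Set.preimage_compl] at h1
      exact isClosed_compl_iff.1 h1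
  · -- embedding of T
    refine ⟨⟨?_⟩, Sum.inr_injective⟩
    apply TopologicalSpace.ext_iff.2
    intro s
    constructor
    · intro hs
      refine isOpen_induced_iff.2 ⟨(Sum.inr '' sᶜ)ᶜ, (hclosed_inr _ hs.isClosed_compl).isOpen_compl, ?_⟩
      rw [Set.preimage_compl, pre_rr, compl_compl]
    · intro hs
      obtain ⟨t', ht', rfl⟩ := isOpen_induced_iff.1 hs
      have h1 := ((hchar t'ᶜ).1 ht'.isClosed_compl).2.1
      rw [Set.preimage_compl] at h1
      exact isClosed_compl_iff.1 h1
end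

section
/- Let G be a locally compact Hausdorff group acting with the convergence property on a compact Hausdorff space T with |T| ≥ 3, and let X = G ⊔ T be the attractor sum. For a net (g_n) on G and t ∈ T: g_n → t in X if and only if (g_n) has no cluster point in G and the set of attractor points of (g_n) in T equals {t}. -/
open Filter Topology Set Pointwise

/-- From `|T| ≥ 3` we can always find a point different from two given ones. -/
lemma exists_third_point {T : Type*} (hT : 3 ≤ (Set.univ : Set T).encard) (b w : T) :
    ∃ c : T, c ≠ b ∧ c ≠ w := by
  by_contra h
  push_neg at h
  have hsub : (Set.univ : Set T) ⊆ {b, w} := by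
    intro c _
    rcases em (c = b) with hc | hc
    · exact Or.inl hc
    · exact Or.inr (h c hc)
  have h1 : (Set.univ : Set T).encard ≤ ({b, w} : Set T).encard := Set.encard_mono hsub
  have h2 : ({b, w} : Set T).encard ≤ 2 := by
    calc ({b, w} : Set T).encard ≤ ({w} : Set T).encard + 1 := Set.encard_insert_le _ _
    _ = 2 := by rw [Set.encard_singleton]; rfl
  have : (3 : ℕ∞) ≤ 2 := hT.trans (h1.trans h2)
  norm_num at this

/-- A collapsing filter has no cluster point in the group. -/
lemma collapses_noClusterPt {G T : Type*} [Group G] [TopologicalSpace G] [TopologicalSpace T]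
    [T2Space T] [MulAction G T] [ContinuousSMul G T]
    (hT : 3 ≤ (Set.univ : Set T).encard)
    {l : Filter G} [hl : l.NeBot] {a b : T}
    (hc : CollapsesF (fun (g : G) (t : T) => g • t) l a b) (x : G) : ¬ ClusterPt x l := by
  intro hx
  obtain ⟨c, hcb, hcw⟩ := exists_third_point hT b (x⁻¹ • a)
  have hxa : x • c ≠ a := by
    intro h
    apply hcw
    rw [← h, inv_smul_smul]
  obtain ⟨U, V, hU, hV, haU, hxV, hUV⟩ := t2_separation hxa.symm
  have hbK : b ∉ ({c} : Set T) := by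
    simp only [Set.mem_singleton_iff]
    exact fun h => hcb h.symm
  have h1 : ∀ᶠ g in l, g • c ∈ U := by
    have := hc {c} isCompact_singleton hbK U (hU.mem_nhds haU)
    filter_upwards [this] with g hg
    exact hg c rfl
  have hcont : Continuous fun g : G => g • c := continuous_id.smul continuous_const
  have h2 : {g : G | g • c ∈ V} ∈ 𝓝 x :=
    hcont.continuousAt.preimage_mem_nhds (hV.mem_nhds hxV)
  haveI : (𝓝 x ⊓ l).NeBot := hx
  have h1' : ∀ᶠ g in 𝓝 x ⊓ l, g • c ∈ U := h1.filter_mono inf_le_right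
  have h2' : ∀ᶠ g in 𝓝 x ⊓ l, g • c ∈ V := Filter.Eventually.filter_mono inf_le_left h2
  obtain ⟨g, hg1, hg2⟩ := (h1'.and h2').exists
  exact (Set.disjoint_left.mp hUV) hg1 hg2

/-- Convergence in the attractor sum: for a net `(g_n)` on `G` and `t ∈ T`, `g_n → t` in the
attractor sum iff `(g_n)` has no cluster point in `G` and its set of attractor points is `{t}`. -/
theorem attractorSum_tendsto_iff {G T : Type*}
    [Group G] [TopologicalSpace G] [IsTopologicalGroup G] [LocallyCompactSpace G] [T2Space G]
    [TopologicalSpace T] [CompactSpace T] [T2Space T]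
    [MulAction G T] [ContinuousSMul G T]
    (hconv : IsConvergenceF (fun (g : G) (t : T) => g • t))
    (hT : 3 ≤ (Set.univ : Set T).encard)
    (X : Type*) [TopologicalSpace X] (i : G → X) (j : T → X)
    (hi : Function.Injective i) (hj : Function.Injective j)
    (hcover : Set.range i ∪ Set.range j = Set.univ)
    (hdisj : Set.range i ∩ Set.range j = ∅)
    (hchar : ∀ P : Set X, IsClosed P ↔
      IsClosed (i ⁻¹' P) ∧ IsClosed (j ⁻¹' P) ∧
        attractorPtsF (fun (g : G) (t : T) => g • t) (i ⁻¹' P) ⊆ j ⁻¹' P)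
    (l : Filter G) (hl : l.NeBot) (t : T) :
    Filter.Tendsto i l (nhds (j t)) ↔
      ((∀ x : G, ¬ ClusterPt x l) ∧
        {u : T | ∃ v : T, ∃ l' : Filter G, l' ≤ l ∧ l'.NeBot ∧
          CollapsesF (fun (g : G) (t : T) => g • t) l' u v} = {t}) := by
  have hdisj' : ∀ (g : G) (u : T), i g ≠ j u := by
    intro g u h
    have : i g ∈ Set.range i ∩ Set.range j := ⟨⟨g, rfl⟩, ⟨u, h.symm⟩⟩
    rw [hdisj] at this
    exact this
  constructor
  · intro htend
    -- Part (a): no cluster point in G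
    have hnc : ∀ x : G, ¬ ClusterPt x l := by
      intro x hx
      obtain ⟨K, hK, hKx⟩ := exists_compact_mem_nhds x
      have hpreK : i ⁻¹' (i '' K) = K := hi.preimage_image K
      have hclosed : IsClosed (i '' K) := by
        rw [hchar]
        refine ⟨by rw [hpreK]; exact hK.isClosed, ?_, ?_⟩
        · have : j ⁻¹' (i '' K) = ∅ := by
            ext u
            simp only [Set.mem_preimage, Set.mem_empty_iff_false, iff_false]
            rintro ⟨g, _, hgu⟩
            exact hdisj' g u hgu
          rw [this]
          exact isClosed_empty
        · rw [hpreK]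
          rintro u ⟨v, m, hm, hmK, hcol⟩
          exfalso
          haveI := hm
          obtain ⟨y, _, hy⟩ := hK hmK
          exact collapses_noClusterPt hT hcol y hy
      have hjt : j t ∈ (i '' K)ᶜ := by
        rintro ⟨g, _, hg⟩
        exact hdisj' g t hg
      have hev : ∀ᶠ g in l, i g ∈ (i '' K)ᶜ :=
        htend (hclosed.isOpen_compl.mem_nhds hjt)
      have hev' : ∀ᶠ g in l, g ∉ K := by
        filter_upwards [hev] with g hg hgK
        exact hg ⟨g, hgK, rfl⟩
      haveI : (𝓝 x ⊓ l).NeBot := hx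
      have h1 : ∀ᶠ g in 𝓝 x ⊓ l, g ∈ K := Filter.Eventually.filter_mono inf_le_left hKx
      have h2 : ∀ᶠ g in 𝓝 x ⊓ l, g ∉ K := hev'.filter_mono inf_le_right
      obtain ⟨g, hg1, hg2⟩ := (h1.and h2).exists
      exact hg2 hg1
    -- Part (b): attractor set equals {t}
    have hS : {u : T | ∃ v : T, ∃ l' : Filter G, l' ≤ l ∧ l'.NeBot ∧
        CollapsesF (fun (g : G) (t : T) => g • t) l' u v} ⊆ {t} := by
      rintro u ⟨v, l', hl'le, hl'ne, hcol⟩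
      rw [Set.mem_singleton_iff]
      by_contra hut
      have hmem : ({t}ᶜ : Set T) ∈ 𝓝 u :=
        isOpen_compl_singleton.mem_nhds (by simpa using hut)
      obtain ⟨C, hCmem, hCclosed, hCsub⟩ := exists_mem_nhds_isClosed_subset hmem
      obtain ⟨c₁, hc₁v, _⟩ := exists_third_point hT v v
      obtain ⟨c₂, hc₂v, hc₂c₁⟩ := exists_third_point hT v c₁
      set H : Set G := ((fun g : G => g • c₁) ⁻¹' C) ∩ ((fun g : G => g • c₂) ⁻¹' C) with hHdef
      have hHclosed : IsClosed H :=
        (hCclosed.preimage (continuous_id.smul continuous_const)).inter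
          (hCclosed.preimage (continuous_id.smul continuous_const))
      have hattr : attractorPtsF (fun (g : G) (t : T) => g • t) H ⊆ C := by
        rintro u' ⟨v', m, hmne, hmH, hcol'⟩
        haveI := hmne
        obtain ⟨c, hcv', hcH⟩ : ∃ c : T, c ≠ v' ∧ ∀ g ∈ H, g • c ∈ C := by
          rcases eq_or_ne v' c₁ with h | h
          · exact ⟨c₂, fun he => hc₂c₁ (he.trans h), fun g hg => hg.2⟩
          · exact ⟨c₁, fun he => h (he ▸ rfl), fun g hg => hg.1⟩
        have hmemH : ∀ᶠ g in m, g ∈ H := hmH (Filter.mem_principal_self H)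
        rw [← hCclosed.closure_eq]
        rw [mem_closure_iff_nhds]
        intro U hU
        have hbK : v' ∉ ({c} : Set T) := by
          simp only [Set.mem_singleton_iff]
          exact fun h => hcv' h.symm
        have h1 : ∀ᶠ g in m, g • c ∈ U := by
          have := hcol' {c} isCompact_singleton hbK U hU
          filter_upwards [this] with g hg
          exact hg c rfl
        obtain ⟨g, hg1, hg2⟩ := (h1.and hmemH).exists
        exact ⟨g • c, hg1, hcH g hg2⟩
      have hpre_i : i ⁻¹' (i '' H ∪ j '' C) = H := by
        ext g
        simp only [Set.mem_preimage, Set.mem_union]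
        constructor
        · rintro (⟨g', hg', he⟩ | ⟨u', _, he⟩)
          · rwa [← hi he]
          · exact absurd he.symm (hdisj' g u')
        · intro hg
          exact Or.inl ⟨g, hg, rfl⟩
      have hpre_j : j ⁻¹' (i '' H ∪ j '' C) = C := by
        ext u'
        simp only [Set.mem_preimage, Set.mem_union]
        constructor
        · rintro (⟨g', _, he⟩ | ⟨u'', hu'', he⟩)
          · exact absurd he (hdisj' g' u')
          · rwa [← hj he]
        · intro hu'
          exact Or.inr ⟨u', hu', rfl⟩
      have hPclosed : IsClosed (i '' H ∪ j '' C) := by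
        rw [hchar, hpre_i, hpre_j]
        exact ⟨hHclosed, hCclosed, hattr⟩
      have hjtP : j t ∈ (i '' H ∪ j '' C)ᶜ := by
        rintro (⟨g, _, hg⟩ | ⟨u', hu', hg⟩)
        · exact hdisj' g t hg
        · exact hCsub hu' (by rw [hj hg]; rfl)
      have hev : ∀ᶠ g in l, i g ∈ (i '' H ∪ j '' C)ᶜ :=
        htend (hPclosed.isOpen_compl.mem_nhds hjtP)
      have hev' : ∀ᶠ g in l', g ∉ H := by
        have := hl'le hev
        filter_upwards [this] with g hg hgH
        exact hg (Or.inl ⟨g, hgH, rfl⟩)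
      have hvK : v ∉ ({c₁, c₂} : Set T) := by
        simp only [Set.mem_insert_iff, Set.mem_singleton_iff]
        rintro (h | h)
        · exact hc₁v h.symm
        · exact hc₂v h.symm
      have hK : IsCompact ({c₁, c₂} : Set T) := (Set.toFinite _).isCompact
      have hevH : ∀ᶠ g in l', g ∈ H := by
        have := hcol {c₁, c₂} hK hvK C hCmem
        filter_upwards [this] with g hg
        exact ⟨hg c₁ (Or.inl rfl), hg c₂ (Or.inr rfl)⟩
      obtain ⟨g, hg1, hg2⟩ := (hevH.and hev').exists
      exact hg2 hg1
    obtain ⟨l', hle, hne, a, b, hcol⟩ := hconv l hl hnc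
    have haS : a ∈ {u : T | ∃ v : T, ∃ l' : Filter G, l' ≤ l ∧ l'.NeBot ∧
        CollapsesF (fun (g : G) (t : T) => g • t) l' u v} := ⟨b, l', hle, hne, hcol⟩
    have hat : a = t := hS haS
    refine ⟨hnc, Set.Subset.antisymm hS ?_⟩
    intro u hu
    rw [Set.mem_singleton_iff] at hu
    subst hu
    exact hat ▸ haS
  · rintro ⟨hnc, hS⟩
    intro s hs
    obtain ⟨U, hUs, hUopen, hjtU⟩ := mem_nhds_iff.mp hs
    rw [Filter.mem_map]
    refine Filter.mem_of_superset ?_ (Set.preimage_mono hUs)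
    by_contra hne
    haveI hm : (l ⊓ 𝓟 (i ⁻¹' U)ᶜ).NeBot := by
      rw [Filter.inf_principal_neBot_iff]
      intro V hV
      by_contra hemp
      apply hne
      refine Filter.mem_of_superset hV fun g hg => ?_
      by_contra hgU
      exact hemp ⟨g, hg, hgU⟩
    set m := l ⊓ 𝓟 (i ⁻¹' U)ᶜ with hmdef
    have hmnc : ∀ x : G, ¬ ClusterPt x m := fun x hx => hnc x (hx.mono inf_le_left)
    obtain ⟨m', hm'le, hm'ne, a, b, hcol⟩ := hconv m hm hmnc
    have hm'H : m' ≤ 𝓟 (i ⁻¹' Uᶜ) := by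
      have : m' ≤ 𝓟 (i ⁻¹' U)ᶜ := hm'le.trans inf_le_right
      rwa [Set.preimage_compl]
    have hUc : IsClosed (Uᶜ : Set X) := hUopen.isClosed_compl
    have hattr := ((hchar Uᶜ).mp hUc).2.2
    have haU : a ∈ j ⁻¹' Uᶜ := hattr ⟨b, m', hm'ne, hm'H, hcol⟩
    have haS : a ∈ ({t} : Set T) := by
      rw [← hS]
      exact ⟨b, m', hm'le.trans inf_le_left, hm'ne, hcol⟩
    rw [Set.mem_singleton_iff] at haS
    subst haS
    exact haU hjtU
end

section
/- Let G be a locally compact Hausdorff group acting with the convergence property on a compact Hausdorff space T with |T| ≥ 3, and let X = G ⊔ T be the attractor sum. Then the map R̂ : G × X → X defined by R̂(g,x) = x·g for x ∈ G and R̂(g,x) = x for x ∈ T is continuous, and the map L̂ : G × X → X given by (g,x) ↦ g·x (group multiplication on G, the action on T) is continuous. -/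
open Filter Topology Set Pointwise

section Aux

variable {G T : Type*} [Group G] [TopologicalSpace G] [IsTopologicalGroup G]
  [TopologicalSpace T] [CompactSpace T] [T2Space T]
  [MulAction G T] [ContinuousSMul G T]

/-- Uniform tube lemma for the action: if `w₀ • K ⊆ V` with `K` compact and `V` open, then
`w • k ∈ V` for all `w` near `w₀` and `k ∈ K`. -/
lemma smul_tube {w₀ : G} {K : Set T} {V : Set T} (hK : IsCompact K) (hV : IsOpen V)
    (h : ∀ k ∈ K, w₀ • k ∈ V) : ∃ N ∈ 𝓝 w₀, ∀ w ∈ N, ∀ k ∈ K, w • k ∈ V := by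
  obtain ⟨u, v, hu, hv, hsu, htv, huv⟩ :=
    generalized_tube_lemma (isCompact_singleton (x := w₀)) hK
      (hV.preimage (continuous_smul : Continuous fun p : G × T => p.1 • p.2))
      (by rintro ⟨w, k⟩ ⟨hw, hk⟩
          rcases hw with rfl
          exact h k hk)
  exact ⟨u, hu.mem_nhds (hsu rfl), fun w hw k hk =>
    huv (show (w, k) ∈ u ×ˢ v from ⟨hw, htv hk⟩)⟩

/-- Surround a compact set avoiding a point by a compact set (with open interior part)
still avoiding the point. -/
lemma exists_compact_between_notMem {C₀ : Set T} (hC₀ : IsCompact C₀) {v : T} (hv : v ∉ C₀) :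
    ∃ (V' C : Set T), IsOpen V' ∧ C₀ ⊆ V' ∧ V' ⊆ C ∧ IsCompact C ∧ v ∉ C := by
  obtain ⟨U, V'', hU, hV'', hCU, hvV'', hdisj⟩ := hC₀.separation_of_notMem hv
  refine ⟨U, closure U, hU, hCU, subset_closure, (isClosed_closure).isCompact, fun hvc => ?_⟩
  have hsub : closure U ⊆ V''ᶜ :=
    closure_minimal (fun x hx hx' => Set.disjoint_left.mp hdisj hx hx') hV''.isClosed_compl
  exact hsub hvc hvV''

/-- Attractor points of `A * W⁻¹` (for compact `W`) are attractor points of `A`. -/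
lemma attractorPts_mul_inv_subset (W A : Set G) (hW : IsCompact W) :
    attractorPtsF (fun (g : G) (t : T) => g • t) (A * W⁻¹)
      ⊆ attractorPtsF (fun (g : G) (t : T) => g • t) A := by
  classical
  rintro u ⟨v, l, hne, hle, hcol⟩
  have hmeml : A * W⁻¹ ∈ l := Filter.le_principal_iff.mp hle
  have hchoice : ∀ h : G, h ∈ A * W⁻¹ → ∃ q : G × G, q.1 ∈ A ∧ q.2 ∈ W ∧ q.1 * q.2⁻¹ = h := by
    rintro h hh
    rw [Set.mem_mul] at hh
    obtain ⟨a, ha, b, hb, rfl⟩ := hh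
    exact ⟨(a, b⁻¹), ha, by simpa using hb, by simp⟩
  set σ : G → G × G := fun h => if hh : h ∈ A * W⁻¹ then (hchoice h hh).choose else (1, 1) with hσdef
  have hσ : ∀ᶠ h in l, (σ h).1 ∈ A ∧ (σ h).2 ∈ W ∧ (σ h).1 * (σ h).2⁻¹ = h := by
    filter_upwards [hmeml] with h hh
    simp only [hσdef, dif_pos hh]
    exact (hchoice h hh).choose_spec
  set m : Filter (G × G) := Filter.map σ l with hmdef
  haveI hmne : m.NeBot := hne.map σ
  have hWm : Filter.map Prod.snd m ≤ 𝓟 W := by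
    rw [Filter.le_principal_iff, hmdef, Filter.map_map, Filter.mem_map]
    exact hσ.mono fun h hh => hh.2.1
  obtain ⟨w₀, hw₀W, hclw⟩ := hW hWm
  set m' : Filter (G × G) := m ⊓ Filter.comap Prod.snd (𝓝 w₀) with hm'def
  haveI hm'ne : m'.NeBot := by
    rw [hm'def, Filter.neBot_inf_comap_iff_map, inf_comm]
    exact hclw
  have hm'le : m' ≤ m := inf_le_left
  refine ⟨w₀⁻¹ • v, Filter.map Prod.fst m', hm'ne.map _, ?_, ?_⟩
  · rw [Filter.le_principal_iff, Filter.mem_map]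
    refine hm'le ?_
    rw [hmdef, Filter.mem_map]
    exact hσ.mono fun h hh => hh.1
  · intro K hK hvK U hU
    have hC₀ : IsCompact ((fun k => w₀ • k) '' K) := hK.image (continuous_const_smul w₀)
    have hvC₀ : v ∉ (fun k => w₀ • k) '' K := by
      rintro ⟨k, hk, hkv⟩
      exact hvK (by rw [← hkv]; simpa using hk)
    obtain ⟨V', C, hV'open, hC₀V', hV'C, hCcomp, hvC⟩ := exists_compact_between_notMem hC₀ hvC₀
    obtain ⟨N, hN, hNprop⟩ := smul_tube hK hV'open fun k hk => hC₀V' ⟨k, hk, rfl⟩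
    have e1 : ∀ᶠ q in m', q.2 ∈ N :=
      Filter.le_def.mp inf_le_right _ (Filter.preimage_mem_comap hN)
    have e2 : ∀ᶠ q in m', ∀ c ∈ C, (q.1 * q.2⁻¹) • c ∈ U := by
      refine hm'le ?_
      rw [hmdef, Filter.mem_map]
      filter_upwards [hσ, hcol C hCcomp hvC U hU] with h hh hcolh
      simp only [Set.mem_preimage, Set.mem_setOf_eq]
      intro c hc
      rw [hh.2.2]
      exact hcolh c hc
    rw [Filter.eventually_map]
    filter_upwards [e1, e2] with q h1 h2 k hk
    have hmem : q.2 • k ∈ C := hV'C (hNprop q.2 h1 k hk)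
    have := h2 (q.2 • k) hmem
    rwa [smul_smul, inv_mul_cancel_right] at this

/-- Attractor points of `W⁻¹ * A` (for compact `W`) are, up to translation by some `w ∈ W`,
attractor points of `A`. -/
lemma attractorPts_inv_mul (W A : Set G) (hW : IsCompact W) {u : T}
    (hu : u ∈ attractorPtsF (fun (g : G) (t : T) => g • t) (W⁻¹ * A)) :
    ∃ w ∈ W, w • u ∈ attractorPtsF (fun (g : G) (t : T) => g • t) A := by
  classical
  obtain ⟨v, l, hne, hle, hcol⟩ := hu
  have hmeml : W⁻¹ * A ∈ l := Filter.le_principal_iff.mp hle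
  have hchoice : ∀ h : G, h ∈ W⁻¹ * A → ∃ q : G × G, q.1 ∈ W ∧ q.2 ∈ A ∧ q.1⁻¹ * q.2 = h := by
    rintro h hh
    rw [Set.mem_mul] at hh
    obtain ⟨b, hb, a, ha, rfl⟩ := hh
    exact ⟨(b⁻¹, a), by simpa using hb, ha, by simp⟩
  set σ : G → G × G := fun h => if hh : h ∈ W⁻¹ * A then (hchoice h hh).choose else (1, 1) with hσdef
  have hσ : ∀ᶠ h in l, (σ h).1 ∈ W ∧ (σ h).2 ∈ A ∧ (σ h).1⁻¹ * (σ h).2 = h := by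
    filter_upwards [hmeml] with h hh
    simp only [hσdef, dif_pos hh]
    exact (hchoice h hh).choose_spec
  set m : Filter (G × G) := Filter.map σ l with hmdef
  haveI hmne : m.NeBot := hne.map σ
  have hWm : Filter.map Prod.fst m ≤ 𝓟 W := by
    rw [Filter.le_principal_iff, hmdef, Filter.map_map, Filter.mem_map]
    exact hσ.mono fun h hh => hh.1
  obtain ⟨w₀, hw₀W, hclw⟩ := hW hWm
  set m' : Filter (G × G) := m ⊓ Filter.comap Prod.fst (𝓝 w₀) with hm'def
  haveI hm'ne : m'.NeBot := by
    rw [hm'def, Filter.neBot_inf_comap_iff_map, inf_comm]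
    exact hclw
  have hm'le : m' ≤ m := inf_le_left
  refine ⟨w₀, hw₀W, v, Filter.map Prod.snd m', hm'ne.map _, ?_, ?_⟩
  · rw [Filter.le_principal_iff, Filter.mem_map]
    refine hm'le ?_
    rw [hmdef, Filter.mem_map]
    exact hσ.mono fun h hh => hh.2.1
  · intro K hK hvK U hU
    have hcont : Filter.Tendsto (fun p : G × T => p.1 • p.2) (𝓝 (w₀, u)) (𝓝 (w₀ • u)) :=
      (continuous_smul : Continuous fun p : G × T => p.1 • p.2).continuousAt
    have hUpre : (fun p : G × T => p.1 • p.2) ⁻¹' U ∈ 𝓝 (w₀, u) := hcont hU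
    rw [mem_nhds_prod_iff] at hUpre
    obtain ⟨N, hN, U', hU', hprod⟩ := hUpre
    have e1 : ∀ᶠ q in m', q.1 ∈ N :=
      Filter.le_def.mp inf_le_right _ (Filter.preimage_mem_comap hN)
    have e2 : ∀ᶠ q in m', ∀ k ∈ K, (q.1⁻¹ * q.2) • k ∈ U' := by
      refine hm'le ?_
      rw [hmdef, Filter.mem_map]
      filter_upwards [hσ, hcol K hK hvK U' hU'] with h hh hcolh
      simp only [Set.mem_preimage, Set.mem_setOf_eq]
      intro k hk
      rw [hh.2.2]
      exact hcolh k hk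
    rw [Filter.eventually_map]
    filter_upwards [e1, e2] with q h1 h2 k hk
    have : q.1 • (q.1⁻¹ * q.2) • k ∈ U :=
      hprod (show (q.1, (q.1⁻¹ * q.2) • k) ∈ N ×ˢ U' from ⟨h1, h2 k hk⟩)
    rwa [smul_smul, mul_inv_cancel_left] at this

end Aux

/-- Continuity of the extended right multiplications `R̂` and of the extended action `L̂`
on the attractor sum `X = G ⊔ T`. -/
theorem attractorSum_R_L_continuous {G T : Type*}
    [Group G] [TopologicalSpace G] [IsTopologicalGroup G] [LocallyCompactSpace G] [T2Space G]
    [TopologicalSpace T] [CompactSpace T] [T2Space T]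
    [MulAction G T] [ContinuousSMul G T]
    (hconv : IsConvergenceF (fun (g : G) (t : T) => g • t))
    (hT : 3 ≤ (Set.univ : Set T).encard)
    (X : Type*) [TopologicalSpace X] (i : G → X) (j : T → X)
    (hi : Function.Injective i) (hj : Function.Injective j)
    (hcover : Set.range i ∪ Set.range j = Set.univ)
    (hdisj : Set.range i ∩ Set.range j = ∅)
    (hchar : ∀ P : Set X, IsClosed P ↔
      IsClosed (i ⁻¹' P) ∧ IsClosed (j ⁻¹' P) ∧
        attractorPtsF (fun (g : G) (t : T) => g • t) (i ⁻¹' P) ⊆ j ⁻¹' P)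
    (R : G → X → X)
    (hR1 : ∀ g h : G, R g (i h) = i (h * g))
    (hR2 : ∀ (g : G) (t : T), R g (j t) = j t)
    (L : G → X → X)
    (hL1 : ∀ g h : G, L g (i h) = i (g * h))
    (hL2 : ∀ (g : G) (t : T), L g (j t) = j (g • t)) :
    Continuous (fun p : G × X => R p.1 p.2) ∧ Continuous (fun p : G × X => L p.1 p.2) := by
  -- basic disjointness
  have hne : ∀ (g : G) (t : T), i g ≠ j t := by
    intro g t h
    have : i g ∈ Set.range i ∩ Set.range j := ⟨Set.mem_range_self g, h ▸ Set.mem_range_self t⟩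
    rw [hdisj] at this
    exact this
  -- preimage computations
  have hpre_i : ∀ (S : Set G) (B : Set T), i ⁻¹' (i '' S ∪ j '' B) = S := by
    intro S B
    ext h
    simp only [Set.mem_preimage, Set.mem_union]
    constructor
    · rintro (hh | ⟨b, _, hb⟩)
      · exact (hi.mem_set_image).mp hh
      · exact absurd hb.symm (hne h b)
    · exact fun hh => Or.inl ⟨h, hh, rfl⟩
  have hpre_j : ∀ (S : Set G) (B : Set T), j ⁻¹' (i '' S ∪ j '' B) = B := by
    intro S B
    ext t
    simp only [Set.mem_preimage, Set.mem_union]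
    constructor
    · rintro (⟨g, _, hg⟩ | hh)
      · exact absurd hg (hne g t)
      · exact (hj.mem_set_image).mp hh
    · exact fun hh => Or.inr ⟨t, hh, rfl⟩
  -- i is an open map
  have hopen_i : ∀ U : Set G, IsOpen U → IsOpen (i '' U) := by
    intro U hU
    rw [← isClosed_compl_iff, hchar]
    have h1 : i ⁻¹' (i '' U)ᶜ = Uᶜ := by
      rw [Set.preimage_compl, hi.preimage_image]
    have h2 : j ⁻¹' (i '' U)ᶜ = Set.univ := by
      ext t
      simp only [Set.mem_preimage, Set.mem_compl_iff, Set.mem_univ, iff_true]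
      rintro ⟨g, _, hg⟩
      exact hne g t hg
    refine ⟨h1 ▸ hU.isClosed_compl, h2 ▸ isClosed_univ, ?_⟩
    rw [h2]
    exact Set.subset_univ _
  -- preimages of open sets under i and j are open
  have hi_cont : ∀ V : Set X, IsOpen V → IsOpen (i ⁻¹' V) := by
    intro V hV
    have := ((hchar Vᶜ).mp (isClosed_compl_iff.mpr hV)).1
    rw [Set.preimage_compl] at this
    exact isClosed_compl_iff.mp this
  -- continuity of R / L at points over G
  have hmain_i : ∀ (F : G → X → X) (hF : ∀ g h : G, F g (i h) = i (h * g)),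
      ∀ (g₀ h₀ : G), ContinuousAt (fun p : G × X => F p.1 p.2) (g₀, i h₀) := by
    intro F hF g₀ h₀
    rw [ContinuousAt, Filter.tendsto_def]
    intro Aset hAset
    simp only [hF g₀ h₀] at hAset
    obtain ⟨V, hVA, hVopen, hVmem⟩ := mem_nhds_iff.mp hAset
    have hiV : IsOpen (i ⁻¹' V) := hi_cont V hVopen
    have hmul : Filter.Tendsto (fun q : G × G => q.1 * q.2) (𝓝 (h₀, g₀)) (𝓝 (h₀ * g₀)) :=
      continuous_mul.continuousAt
    have hpre : (fun q : G × G => q.1 * q.2) ⁻¹' (i ⁻¹' V) ∈ 𝓝 (h₀, g₀) :=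
      hmul (hiV.mem_nhds hVmem)
    rw [mem_nhds_prod_iff] at hpre
    obtain ⟨s, hs, t, ht, hst⟩ := hpre
    obtain ⟨s', hs's, hs'open, hs'mem⟩ := mem_nhds_iff.mp hs
    refine Filter.mem_of_superset
      (prod_mem_nhds ht ((hopen_i s' hs'open).mem_nhds ⟨h₀, hs'mem, rfl⟩)) ?_
    rintro ⟨g, x⟩ ⟨hg, hx⟩
    obtain ⟨h, hh, rfl⟩ := hx
    simp only [Set.mem_preimage, hF g h]
    exact hVA (hst (Set.mk_mem_prod (hs's hh) hg))
  constructor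
  · -- continuity of R
    rw [continuous_iff_continuousAt]
    rintro ⟨g₀, x₀⟩
    have hx₀ : x₀ ∈ Set.range i ∪ Set.range j := hcover ▸ Set.mem_univ x₀
    rcases hx₀ with ⟨h₀, rfl⟩ | ⟨t₀, rfl⟩
    · exact hmain_i R hR1 g₀ h₀
    · rw [ContinuousAt, Filter.tendsto_def]
      intro Aset hAset
      simp only [hR2 g₀ t₀] at hAset
      obtain ⟨V, hVA, hVopen, hVmem⟩ := mem_nhds_iff.mp hAset
      set P : Set X := Vᶜ with hPdef
      have hPclosed : IsClosed P := hVopen.isClosed_compl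
      obtain ⟨hA'closed, hB'closed, hattr⟩ := (hchar P).mp hPclosed
      obtain ⟨W, hWc, hWnhds⟩ := exists_compact_mem_nhds g₀
      set Q : Set X := i '' (i ⁻¹' P * W⁻¹) ∪ j '' (j ⁻¹' P) with hQdef
      have hiQ : i ⁻¹' Q = i ⁻¹' P * W⁻¹ := hpre_i _ _
      have hjQ : j ⁻¹' Q = j ⁻¹' P := hpre_j _ _
      have hQclosed : IsClosed Q := by
        rw [hchar, hiQ, hjQ]
        exact ⟨hA'closed.mul_right_of_isCompact hWc.inv, hB'closed,
          fun u hu => hattr (attractorPts_mul_inv_subset W (i ⁻¹' P) hWc hu)⟩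
      have hjt₀Q : j t₀ ∉ Q := by
        rintro (⟨h, _, hh⟩ | ⟨t, ht, hh⟩)
        · exact hne h t₀ hh
        · rw [hj hh] at ht
          exact ht hVmem
      refine Filter.mem_of_superset
        (prod_mem_nhds hWnhds (hQclosed.isOpen_compl.mem_nhds hjt₀Q)) ?_
      rintro ⟨g, x⟩ ⟨hg, hx⟩
      have hxmem : x ∈ Set.range i ∪ Set.range j := hcover ▸ Set.mem_univ x
      rcases hxmem with ⟨h, rfl⟩ | ⟨t, rfl⟩
      · simp only [Set.mem_preimage, hR1 g h]
        refine hVA (by_contra fun hcon => ?_)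
        have hhg : h * g ∈ i ⁻¹' P := by
          simp only [Set.mem_preimage, hPdef, Set.mem_compl_iff]
          exact hcon
        have : h ∈ i ⁻¹' P * W⁻¹ :=
          ⟨h * g, hhg, g⁻¹, by simpa using hg, by simp⟩
        exact hx (Or.inl ⟨h, this, rfl⟩)
      · simp only [Set.mem_preimage, hR2 g t]
        refine hVA (by_contra fun hcon => ?_)
        have : t ∈ j ⁻¹' P := hcon
        exact hx (Or.inr ⟨t, this, rfl⟩)
  · -- continuity of L
    rw [continuous_iff_continuousAt]
    rintro ⟨g₀, x₀⟩
    have hx₀ : x₀ ∈ Set.range i ∪ Set.range j := hcover ▸ Set.mem_univ x₀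
    rcases hx₀ with ⟨h₀, rfl⟩ | ⟨t₀, rfl⟩
    · -- over G: like the R case but with left multiplication
      rw [ContinuousAt, Filter.tendsto_def]
      intro Aset hAset
      simp only [hL1 g₀ h₀] at hAset
      obtain ⟨V, hVA, hVopen, hVmem⟩ := mem_nhds_iff.mp hAset
      have hiV : IsOpen (i ⁻¹' V) := hi_cont V hVopen
      have hmul : Filter.Tendsto (fun q : G × G => q.1 * q.2) (𝓝 (g₀, h₀)) (𝓝 (g₀ * h₀)) :=
        continuous_mul.continuousAt
      have hpre : (fun q : G × G => q.1 * q.2) ⁻¹' (i ⁻¹' V) ∈ 𝓝 (g₀, h₀) :=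
        hmul (hiV.mem_nhds hVmem)
      rw [mem_nhds_prod_iff] at hpre
      obtain ⟨s, hs, t, ht, hst⟩ := hpre
      obtain ⟨t', ht't, ht'open, ht'mem⟩ := mem_nhds_iff.mp ht
      refine Filter.mem_of_superset
        (prod_mem_nhds hs ((hopen_i t' ht'open).mem_nhds ⟨h₀, ht'mem, rfl⟩)) ?_
      rintro ⟨g, x⟩ ⟨hg, hx⟩
      obtain ⟨h, hh, rfl⟩ := hx
      simp only [Set.mem_preimage, hL1 g h]
      exact hVA (hst (Set.mk_mem_prod hg (ht't hh)))
    · rw [ContinuousAt, Filter.tendsto_def]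
      intro Aset hAset
      simp only [hL2 g₀ t₀] at hAset
      obtain ⟨V, hVA, hVopen, hVmem⟩ := mem_nhds_iff.mp hAset
      set P : Set X := Vᶜ with hPdef
      have hPclosed : IsClosed P := hVopen.isClosed_compl
      obtain ⟨hA'closed, hFclosed, hattr⟩ := (hchar P).mp hPclosed
      set F : Set T := j ⁻¹' P with hFdef
      -- g₀ • t₀ ∉ F
      have hg₀t₀ : g₀ • t₀ ∉ F := fun hmem => hmem hVmem
      -- continuity of the action: neighborhoods avoiding F
      have hFc_open : IsOpen ((fun p : G × T => p.1 • p.2) ⁻¹' Fᶜ) :=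
        hFclosed.isOpen_compl.preimage continuous_smul
      have hpre : (fun p : G × T => p.1 • p.2) ⁻¹' Fᶜ ∈ 𝓝 (g₀, t₀) :=
        hFc_open.mem_nhds hg₀t₀
      rw [mem_nhds_prod_iff] at hpre
      obtain ⟨N, hN, O, hO, hNO⟩ := hpre
      obtain ⟨W, hWnhds, hWN, hWc⟩ := local_compact_nhds hN
      set B : Set T := {t | ∃ g ∈ W, g • t ∈ F} with hBdef
      have hBclosed : IsClosed B := by
        have hBeq : B = Prod.snd '' ((W ×ˢ (Set.univ : Set T)) ∩
            (fun p : G × T => p.1 • p.2) ⁻¹' F) := by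
          ext t
          simp only [hBdef, Set.mem_setOf_eq, Set.mem_image, Set.mem_inter_iff,
            Set.mem_prod, Set.mem_preimage, Set.mem_univ, and_true]
          constructor
          · rintro ⟨g, hg, hgt⟩
            exact ⟨(g, t), ⟨hg, hgt⟩, rfl⟩
          · rintro ⟨⟨g, t'⟩, ⟨hg, hgt⟩, rfl⟩
            exact ⟨g, hg, hgt⟩
        rw [hBeq]
        exact (((hWc.prod isCompact_univ).inter_right
          (hFclosed.preimage continuous_smul)).image continuous_snd).isClosed
      set Q : Set X := i '' (W⁻¹ * i ⁻¹' P) ∪ j '' B with hQdef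
      have hiQ : i ⁻¹' Q = W⁻¹ * i ⁻¹' P := hpre_i _ _
      have hjQ : j ⁻¹' Q = B := hpre_j _ _
      have hQclosed : IsClosed Q := by
        rw [hchar, hiQ, hjQ]
        refine ⟨hA'closed.mul_left_of_isCompact hWc.inv, hBclosed, fun u hu => ?_⟩
        obtain ⟨w, hwW, hwu⟩ := attractorPts_inv_mul W (i ⁻¹' P) hWc hu
        exact ⟨w, hwW, hattr hwu⟩
      have hjt₀Q : j t₀ ∉ Q := by
        rintro (⟨h, _, hh⟩ | ⟨t, ht, hh⟩)
        · exact hne h t₀ hh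
        · rw [hj hh] at ht
          obtain ⟨g, hg, hgt⟩ := ht
          exact hNO (Set.mk_mem_prod (hWN hg) (mem_of_mem_nhds hO)) hgt
      refine Filter.mem_of_superset
        (prod_mem_nhds hWnhds (hQclosed.isOpen_compl.mem_nhds hjt₀Q)) ?_
      rintro ⟨g, x⟩ ⟨hg, hx⟩
      have hxmem : x ∈ Set.range i ∪ Set.range j := hcover ▸ Set.mem_univ x
      rcases hxmem with ⟨h, rfl⟩ | ⟨t, rfl⟩
      · simp only [Set.mem_preimage, hL1 g h]
        refine hVA (by_contra fun hcon => ?_)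
        have hgh : g * h ∈ i ⁻¹' P := hcon
        have : h ∈ W⁻¹ * i ⁻¹' P :=
          ⟨g⁻¹, by simpa using hg, g * h, hgh, by simp⟩
        exact hx (Or.inl ⟨h, this, rfl⟩)
      · simp only [Set.mem_preimage, hL2 g t]
        refine hVA (by_contra fun hcon => ?_)
        have hgt : g • t ∈ F := hcon
        exact hx (Or.inr ⟨t, ⟨g, hg, hgt⟩, rfl⟩)
end

section
/- Let G be a locally compact Hausdorff group acting with the convergence property on a compact Hausdorff space T with |T| ≥ 3. Then the extended action of G on the attractor sum X = G ⊔ T (by left multiplication on G and the given action on T) has the convergence property: moreover if a net (g_n) on G collapses to u except at v relative to T, then it collapses to u except at v relative to X. -/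
set_option linter.unusedSectionVars false
set_option linter.unusedVariables false
set_option maxHeartbeats 1000000


open Filter Topology Set Pointwise

section Aux

variable {G T : Type*} [Group G] [TopologicalSpace G] [T2Space G]
  [TopologicalSpace T] [CompactSpace T] [T2Space T] [MulAction G T] [ContinuousSMul G T]

lemma collapsesF_mono {act : G → T → T} {l l' : Filter G} {a b : T}
    (h : CollapsesF act l a b) (hle : l' ≤ l) : CollapsesF act l' a b :=
  fun K hK hb U hU => (h K hK hb U hU).filter_mono hle

lemma exists_three {T : Type*} (hT : 3 ≤ (Set.univ : Set T).encard) :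
    ∃ s₁ s₂ s₃ : T, s₁ ≠ s₂ ∧ s₁ ≠ s₃ ∧ s₂ ≠ s₃ := by
  obtain ⟨a, b, -, -, hab⟩ := Set.one_lt_encard_iff.mp (lt_of_lt_of_le (by norm_num) hT)
  by_cases h : ∃ c : T, c ≠ a ∧ c ≠ b
  · obtain ⟨c, hca, hcb⟩ := h
    exact ⟨a, b, c, hab, Ne.symm hca, Ne.symm hcb⟩
  · push_neg at h
    exfalso
    have hsub : (Set.univ : Set T) ⊆ {a, b} := by
      intro c _
      rcases eq_or_ne c a with rfl | h'
      · exact Or.inl rfl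
      · exact Or.inr (h c h')
    have : (3 : ℕ∞) ≤ 2 := hT.trans ((Set.encard_mono hsub).trans_eq (Set.encard_pair hab))
    norm_num at this

lemma noClusterPt (hT : 3 ≤ (Set.univ : Set T).encard) {l : Filter G} (hl : l.NeBot)
    {u v : T} (hc : CollapsesF (fun (g : G) (t : T) => g • t) l u v) (g₀ : G) :
    ¬ ClusterPt g₀ l := by
  intro hcl
  obtain ⟨s₁, s₂, s₃, hs12, hs13, hs23⟩ := exists_three hT
  obtain ⟨t₁, t₂, h12, h1v, h2v⟩ : ∃ t₁ t₂ : T, t₁ ≠ t₂ ∧ t₁ ≠ v ∧ t₂ ≠ v := by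
    rcases eq_or_ne v s₁ with rfl | h1
    · exact ⟨s₂, s₃, hs23, Ne.symm hs12, Ne.symm hs13⟩
    · rcases eq_or_ne v s₂ with rfl | h2
      · exact ⟨s₁, s₃, hs13, Ne.symm h1, Ne.symm hs23⟩
      · exact ⟨s₁, s₂, hs12, Ne.symm h1, Ne.symm h2⟩
  obtain ⟨t, htv, htu⟩ : ∃ t : T, t ≠ v ∧ g₀ • t ≠ u := by
    have hne : g₀ • t₁ ≠ g₀ • t₂ := fun h => h12 (MulAction.injective g₀ h)
    rcases eq_or_ne (g₀ • t₁) u with h | h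
    · exact ⟨t₂, h2v, fun hh => hne (h.trans hh.symm)⟩
    · exact ⟨t₁, h1v, h⟩
  obtain ⟨U, W, hUo, hWo, huU, hgW, hUW⟩ := t2_separation (Ne.symm htu)
  have hev : ∀ᶠ g in l, g • t ∈ U := by
    have := hc {t} isCompact_singleton (fun h => htv (by simpa using h.symm)) U
      (hUo.mem_nhds huU)
    exact this.mono fun g hg => hg t rfl
  have hWm : {g : G | g • t ∈ W} ∈ 𝓝 g₀ := by
    have hco : Continuous fun g : G => g • t := continuous_id.smul continuous_const
    exact hco.continuousAt.preimage_mem_nhds (hWo.mem_nhds hgW)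
  have hev2 : ∀ᶠ g in 𝓝 g₀ ⊓ l, g • t ∈ U ∧ g • t ∈ W := by
    have h1 : ∀ᶠ g in 𝓝 g₀ ⊓ l, g • t ∈ U := hev.filter_mono inf_le_right
    have h2 : ∀ᶠ g in 𝓝 g₀ ⊓ l, g • t ∈ W := Filter.mem_of_superset
      (Filter.mem_inf_of_left hWm) (fun g hg => hg)
    exact h1.and h2
  haveI : (𝓝 g₀ ⊓ l).NeBot := hcl
  obtain ⟨g, hg1, hg2⟩ := hev2.exists
  exact Set.disjoint_iff.mp hUW ⟨hg1, hg2⟩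

lemma attractor_compact (hT : 3 ≤ (Set.univ : Set T).encard) {C : Set G} (hC : IsCompact C) :
    attractorPtsF (fun (g : G) (t : T) => g • t) C = (∅ : Set T) := by
  ext u
  simp only [Set.mem_empty_iff_false, iff_false]
  rintro ⟨v, m, hm, hms, hcol⟩
  haveI := hm
  obtain ⟨c, -, hcl⟩ := hC.exists_clusterPt hms
  exact noClusterPt hT hm hcol c hcl

end Aux

/-- The extended action of `G` on the attractor sum `X = G ⊔ T` has the convergence
property; moreover a net on `G` collapsing to `u` except at `v` relative to `T` also
collapses to `u` except at `v` relative to `X`. -/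
theorem attractorSum_action_convergence {G T : Type*}
    [Group G] [TopologicalSpace G] [IsTopologicalGroup G] [LocallyCompactSpace G] [T2Space G]
    [TopologicalSpace T] [CompactSpace T] [T2Space T]
    [MulAction G T] [ContinuousSMul G T]
    (hconv : IsConvergenceF (fun (g : G) (t : T) => g • t))
    (hT : 3 ≤ (Set.univ : Set T).encard)
    (X : Type*) [TopologicalSpace X] (i : G → X) (j : T → X)
    (hi : Function.Injective i) (hj : Function.Injective j)
    (hcover : Set.range i ∪ Set.range j = Set.univ)
    (hdisj : Set.range i ∩ Set.range j = ∅)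
    (hchar : ∀ P : Set X, IsClosed P ↔
      IsClosed (i ⁻¹' P) ∧ IsClosed (j ⁻¹' P) ∧
        attractorPtsF (fun (g : G) (t : T) => g • t) (i ⁻¹' P) ⊆ j ⁻¹' P)
    (actX : G → X → X)
    (hX1 : ∀ g h : G, actX g (i h) = i (g * h))
    (hX2 : ∀ (g : G) (t : T), actX g (j t) = j (g • t)) :
    IsConvergenceF actX ∧
      ∀ (l : Filter G) (u v : T), l.NeBot →
        CollapsesF (fun (g : G) (t : T) => g • t) l u v →
          CollapsesF actX l (j u) (j v) := by
  classical
  -- basic facts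
  have hrange : ∀ (g : G) (t : T), i g ≠ j t := by
    intro g t h
    have : i g ∈ Set.range i ∩ Set.range j := ⟨Set.mem_range_self g, h ▸ Set.mem_range_self t⟩
    rw [hdisj] at this
    exact this
  have hjcont : Continuous j := continuous_iff_isClosed.mpr fun P hP => ((hchar P).mp hP).2.1
  have hpre_i : ∀ (S : Set G) (R : Set T), i ⁻¹' (i '' S ∪ j '' R) = S := by
    intro S R
    ext g
    simp only [Set.mem_preimage, Set.mem_union, Set.mem_image]
    constructor
    · rintro (⟨g', hg', he⟩ | ⟨t, ht, he⟩)
      · rwa [← hi he]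
      · exact absurd he.symm (hrange g t)
    · intro h
      exact Or.inl ⟨g, h, rfl⟩
  have hpre_j : ∀ (S : Set G) (R : Set T), j ⁻¹' (i '' S ∪ j '' R) = R := by
    intro S R
    ext t
    simp only [Set.mem_preimage, Set.mem_union, Set.mem_image]
    constructor
    · rintro (⟨g', hg', he⟩ | ⟨t', ht', he⟩)
      · exact absurd he (hrange g' t)
      · rwa [← hj he]
    · intro h
      exact Or.inr ⟨t, h, rfl⟩
  have hiopen : ∀ V : Set G, IsOpen V → IsOpen (i '' V) := by
    intro V hV
    rw [← isClosed_compl_iff]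
    have hcompl : (i '' V)ᶜ = i '' Vᶜ ∪ j '' Set.univ := by
      ext x
      rcases (by rw [hcover]; trivial : x ∈ Set.range i ∪ Set.range j) with ⟨g, rfl⟩ | ⟨t, rfl⟩
      · simp only [Set.mem_compl_iff, Set.mem_union, Set.mem_image]
        constructor
        · intro h
          exact Or.inl ⟨g, fun hg => h ⟨g, hg, rfl⟩, rfl⟩
        · rintro (⟨g', hg', he⟩ | ⟨t, -, he⟩) ⟨g'', hg'', he''⟩
          · exact hg' (hi (he''.trans he.symm) ▸ hg'')
          · exact hrange g'' t (he''.trans he.symm)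
      · simp only [Set.mem_compl_iff, Set.mem_union, Set.mem_image]
        constructor
        · intro h
          exact Or.inr ⟨t, trivial, rfl⟩
        · rintro - ⟨g, -, he⟩
          exact hrange g t he
    rw [hcompl, hchar, hpre_i, hpre_j]
    exact ⟨hV.isClosed_compl, isClosed_univ, fun u hu => trivial⟩
  have hicc : ∀ C : Set G, IsCompact C → IsClosed (i '' C) := by
    intro C hC
    have : i '' C = i '' C ∪ j '' (∅ : Set T) := by simp
    rw [this, hchar, hpre_i, hpre_j]
    refine ⟨hC.isClosed, isClosed_empty, ?_⟩
    rw [attractor_compact hT hC]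
  -- X is Hausdorff
  haveI hT2X : T2Space X := by
    have sep_ij : ∀ (g : G) (t : T), ∃ O₁ O₂ : Set X,
        IsOpen O₁ ∧ IsOpen O₂ ∧ i g ∈ O₁ ∧ j t ∈ O₂ ∧ Disjoint O₁ O₂ := by
      intro g t
      obtain ⟨C, hCc, hCn⟩ := exists_compact_mem_nhds g
      refine ⟨i '' interior C, (i '' C)ᶜ, hiopen _ isOpen_interior,
        (hicc C hCc).isOpen_compl, ⟨g, mem_interior_iff_mem_nhds.mpr hCn, rfl⟩, ?_, ?_⟩
      · intro ⟨g', hg', he⟩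
        exact hrange g' t he
      · rw [Set.disjoint_left]
        rintro x ⟨g', hg', rfl⟩ hx
        exact hx ⟨g', interior_subset hg', rfl⟩
    have sep_jj : ∀ t₁ t₂ : T, t₁ ≠ t₂ → ∃ O₁ O₂ : Set X,
        IsOpen O₁ ∧ IsOpen O₂ ∧ j t₁ ∈ O₁ ∧ j t₂ ∈ O₂ ∧ Disjoint O₁ O₂ := by
      obtain ⟨s₁, s₂, s₃, hs12, hs13, hs23⟩ := exists_three hT
      intro t₁ t₂ ht
      obtain ⟨V₁, V₂, hV₁o, hV₂o, ht₁, ht₂, hVd⟩ := t2_separation ht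
      have c1 : Continuous fun g : G => g • s₁ := continuous_id.smul continuous_const
      have c2 : Continuous fun g : G => g • s₂ := continuous_id.smul continuous_const
      have c3 : Continuous fun g : G => g • s₃ := continuous_id.smul continuous_const
      set Hs : Set T → Set G := fun V => {g : G | (g • s₁ ∉ V ∧ g • s₂ ∉ V) ∨
        (g • s₁ ∉ V ∧ g • s₃ ∉ V) ∨ (g • s₂ ∉ V ∧ g • s₃ ∉ V)} with hHsdef
      have hHclosed : ∀ V : Set T, IsOpen V → IsClosed (Hs V) := by
        intro V hV
        have heq : Hs V = (((fun g : G => g • s₁) ⁻¹' Vᶜ) ∩ ((fun g : G => g • s₂) ⁻¹' Vᶜ)) ∪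
            ((((fun g : G => g • s₁) ⁻¹' Vᶜ) ∩ ((fun g : G => g • s₃) ⁻¹' Vᶜ)) ∪
             (((fun g : G => g • s₂) ⁻¹' Vᶜ) ∩ ((fun g : G => g • s₃) ⁻¹' Vᶜ))) := by
          ext g
          simp only [hHsdef, Set.mem_setOf_eq, Set.mem_union, Set.mem_inter_iff,
            Set.mem_preimage, Set.mem_compl_iff]
        rw [heq]
        exact ((hV.isClosed_compl.preimage c1).inter (hV.isClosed_compl.preimage c2)).union
          (((hV.isClosed_compl.preimage c1).inter (hV.isClosed_compl.preimage c3)).union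
           ((hV.isClosed_compl.preimage c2).inter (hV.isClosed_compl.preimage c3)))
      have hHattr : ∀ V : Set T, IsOpen V →
          attractorPtsF (fun (g : G) (t : T) => g • t) (Hs V) ⊆ Vᶜ := by
        intro V hV u' hu'
        simp only [Set.mem_compl_iff]
        intro huV
        obtain ⟨v', m, hm, hms, hcolm⟩ := hu'
        haveI := hm
        have hKfin : ({s₁, s₂, s₃} : Set T).Finite :=
          (Set.finite_singleton s₃).insert s₂ |>.insert s₁
        have hKf : IsCompact (({s₁, s₂, s₃} : Set T) \ {v'}) := (hKfin.diff (t := {v'})).isCompact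
        have hvKf : v' ∉ (({s₁, s₂, s₃} : Set T) \ {v'}) := by simp
        have hev := hcolm _ hKf hvKf V (hV.mem_nhds huV)
        have hevm : ∀ᶠ g in m, g ∈ Hs V := hms (Filter.mem_principal_self _)
        obtain ⟨g, hg1, hg2⟩ := (hev.and hevm).exists
        have hin : ∀ s : T, (s = s₁ ∨ s = s₂ ∨ s = s₃) → s ≠ v' → g • s ∈ V := by
          intro s hs hsv
          exact hg1 s ⟨by rcases hs with rfl | rfl | rfl <;> simp, by simpa using hsv⟩
        rcases hg2 with ⟨h1, h2⟩ | ⟨h1, h2⟩ | ⟨h1, h2⟩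
        · have e1 : s₁ = v' := by
            by_contra h; exact h1 (hin s₁ (Or.inl rfl) h)
          have e2 : s₂ = v' := by
            by_contra h; exact h2 (hin s₂ (Or.inr (Or.inl rfl)) h)
          exact hs12 (e1.trans e2.symm)
        · have e1 : s₁ = v' := by
            by_contra h; exact h1 (hin s₁ (Or.inl rfl) h)
          have e2 : s₃ = v' := by
            by_contra h; exact h2 (hin s₃ (Or.inr (Or.inr rfl)) h)
          exact hs13 (e1.trans e2.symm)
        · have e1 : s₂ = v' := by
            by_contra h; exact h1 (hin s₂ (Or.inr (Or.inl rfl)) h)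
          have e2 : s₃ = v' := by
            by_contra h; exact h2 (hin s₃ (Or.inr (Or.inr rfl)) h)
          exact hs23 (e1.trans e2.symm)
      have hPclosed : ∀ V : Set T, IsOpen V → IsClosed (i '' Hs V ∪ j '' Vᶜ) := by
        intro V hV
        rw [hchar, hpre_i, hpre_j]
        exact ⟨hHclosed V hV, hV.isClosed_compl, hHattr V hV⟩
      refine ⟨(i '' Hs V₁ ∪ j '' V₁ᶜ)ᶜ, (i '' Hs V₂ ∪ j '' V₂ᶜ)ᶜ,
        (hPclosed V₁ hV₁o).isOpen_compl, (hPclosed V₂ hV₂o).isOpen_compl, ?_, ?_, ?_⟩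
      · rintro (⟨g, -, he⟩ | ⟨s, hs, he⟩)
        · exact hrange g t₁ he
        · exact hs (hj he ▸ ht₁)
      · rintro (⟨g, -, he⟩ | ⟨s, hs, he⟩)
        · exact hrange g t₂ he
        · exact hs (hj he ▸ ht₂)
      · rw [Set.disjoint_left]
        intro x hx1 hx2
        rcases (by rw [hcover]; trivial : x ∈ Set.range i ∪ Set.range j) with ⟨g, rfl⟩ | ⟨s, rfl⟩
        · have hg1 : g ∉ Hs V₁ := fun h => hx1 (Or.inl ⟨g, h, rfl⟩)
          have hg2 : g ∉ Hs V₂ := fun h => hx2 (Or.inl ⟨g, h, rfl⟩)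
          have hd12 : ∀ s : T, s ∈ V₁ → s ∉ V₂ := fun s hs => Set.disjoint_left.mp hVd hs
          simp only [hHsdef, Set.mem_setOf_eq] at hg1 hg2
          push_neg at hg1 hg2
          by_cases h1 : g • s₁ ∈ V₁
          · by_cases h2 : g • s₂ ∈ V₁
            · exact hd12 _ h2 (hg2.1 (hd12 _ h1))
            · exact hd12 _ (hg1.2.2 h2) (hg2.2.1 (hd12 _ h1))
          · exact hd12 _ (hg1.2.1 h1) (hg2.2.2 (hd12 _ (hg1.1 h1)))
        · have hs1 : s ∉ V₁ᶜ := fun h => hx1 (Or.inr ⟨s, h, rfl⟩)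
          have hs2 : s ∉ V₂ᶜ := fun h => hx2 (Or.inr ⟨s, h, rfl⟩)
          simp only [Set.mem_compl_iff, not_not] at hs1 hs2
          exact Set.disjoint_left.mp hVd hs1 hs2
    constructor
    intro x y hxy
    rcases (by rw [hcover]; trivial : x ∈ Set.range i ∪ Set.range j) with ⟨g, rfl⟩ | ⟨t, rfl⟩ <;>
      rcases (by rw [hcover]; trivial : y ∈ Set.range i ∪ Set.range j) with ⟨g', rfl⟩ | ⟨t', rfl⟩
    · obtain ⟨V₁, V₂, h1, h2, hg1, hg2, hd⟩ := t2_separation (fun h : g = g' => hxy (by rw [h]))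
      exact ⟨i '' V₁, i '' V₂, hiopen _ h1, hiopen _ h2, ⟨g, hg1, rfl⟩, ⟨g', hg2, rfl⟩,
        (Set.disjoint_image_iff hi).mpr hd⟩
    · exact sep_ij g t'
    · obtain ⟨O₁, O₂, h1, h2, hm1, hm2, hd⟩ := sep_ij g' t
      exact ⟨O₂, O₁, h2, h1, hm2, hm1, hd.symm⟩
    · exact sep_jj t t' (fun h => hxy (by rw [h]))
  -- main transfer statement
  have main : ∀ (l : Filter G) (u v : T), l.NeBot →
      CollapsesF (fun (g : G) (t : T) => g • t) l u v →
        CollapsesF actX l (j u) (j v) := by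
    intro l u v hl hcol
    haveI := hl
    intro K hK hvK U hU
    obtain ⟨U', hU'sub, hU'open, hjuU'⟩ := mem_nhds_iff.mp hU
    have hKclosed : IsClosed K := hK.isClosed
    -- part B : points of K coming from T
    have hBc : IsCompact (j ⁻¹' K) := (hKclosed.preimage hjcont).isCompact
    have hvB : v ∉ j ⁻¹' K := fun h => hvK h
    have hBev : ∀ᶠ g in l, ∀ t ∈ j ⁻¹' K, j (g • t) ∈ U' := by
      have := hcol (j ⁻¹' K) hBc hvB (j ⁻¹' U')
        ((hU'open.preimage hjcont).mem_nhds hjuU')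
      exact this.mono fun g hg t ht => hg t ht
    -- part A : points of K coming from G
    have hAev : ∀ᶠ g in l, ∀ h ∈ i ⁻¹' K, i (g * h) ∈ U' := by
      by_contra hcon
      have hPclosed : IsClosed U'ᶜ := hU'open.isClosed_compl
      have hattr := ((hchar U'ᶜ).mp hPclosed).2.2
      set H : Set G := i ⁻¹' U'ᶜ with hHdef
      set A : Set G := i ⁻¹' K with hAdef
      set S : Set G := {g : G | ∃ h, h ∈ A ∧ g * h ∈ H} with hSdef
      have hfreq : ∃ᶠ g in l, g ∈ S := by
        rw [Filter.not_eventually] at hcon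
        refine hcon.mono fun g hg => ?_
        push_neg at hg
        obtain ⟨h, hhA, hhU⟩ := hg
        exact ⟨h, hhA, hhU⟩
      set l' : Filter G := l ⊓ 𝓟 S with hl'def
      haveI hl' : l'.NeBot := Filter.frequently_mem_iff_neBot.mp hfreq
      set c : G → G := fun g => if hg : ∃ h, h ∈ A ∧ g * h ∈ H then hg.choose else 1 with hcdef
      have hcS : ∀ g ∈ S, c g ∈ A ∧ g * c g ∈ H := by
        intro g hg
        have : c g = hg.choose := by rw [hcdef]; exact dif_pos hg
        rw [this]
        exact ⟨hg.choose_spec.1, hg.choose_spec.2⟩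
      have hSl' : S ∈ l' := Filter.mem_inf_of_right (Filter.mem_principal_self S)
      -- key claim
      have key : ∃ l₂ : Filter G, l₂ ≤ l' ∧ l₂.NeBot ∧ ∃ b : T,
          ∀ K' : Set T, IsCompact K' → b ∉ K' → ∃ C : Set T, IsCompact C ∧ v ∉ C ∧
            ∀ᶠ g in l₂, ∀ t ∈ K', (c g) • t ∈ C := by
        by_cases hclus : ∃ a₀ : G, ClusterPt a₀ (Filter.map c l')
        · obtain ⟨a₀, ha₀⟩ := hclus
          have hne2 : (Filter.map c (l' ⊓ Filter.comap c (𝓝 a₀))).NeBot := by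
            rw [Filter.push_pull, inf_comm]
            exact ha₀
          refine ⟨l' ⊓ Filter.comap c (𝓝 a₀), inf_le_left, hne2.of_map, a₀⁻¹ • v, ?_⟩
          intro K' hK' hbK'
          have himc : IsCompact ((fun t : T => a₀ • t) '' K') :=
            hK'.image (continuous_const.smul continuous_id)
          have hdisj2 : Disjoint ({v} : Set T) ((fun t : T => a₀ • t) '' K') := by
            rw [Set.disjoint_left]
            rintro x rfl ⟨t, ht, hte⟩
            exact hbK' (by rw [← hte, inv_smul_smul]; exact ht)
          obtain ⟨V', V, hV'o, hVo, hvV', hKV, hVd⟩ :=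
            SeparatedNhds.of_isCompact_isCompact isCompact_singleton himc hdisj2
          have hvnc : v ∉ closure V := by
            intro hv
            have : closure V ⊆ V'ᶜ :=
              closure_minimal (Set.disjoint_right.mp hVd) hV'o.isClosed_compl
            exact this hv (hvV' rfl)
          refine ⟨closure V, isClosed_closure.isCompact, hvnc, ?_⟩
          have htube : ∀ᶠ a in 𝓝 a₀, ∀ t ∈ K', a • t ∈ V := by
            refine hK'.eventually_forall_of_forall_eventually fun t ht => ?_
            have hmem : a₀ • t ∈ V := hKV (Set.mem_image_of_mem _ ht)
            have : ContinuousAt (fun z : G × T => z.1 • z.2) (a₀, t) :=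
              continuous_smul.continuousAt
            exact this.preimage_mem_nhds (hVo.mem_nhds hmem)
          have hmemc : c ⁻¹' {a : G | ∀ t ∈ K', a • t ∈ V} ∈ Filter.comap c (𝓝 a₀) :=
            Filter.preimage_mem_comap htube
          filter_upwards [Filter.mem_inf_of_right hmemc] with g hg t ht
          exact subset_closure (hg t ht)
        · push_neg at hclus
          haveI : (Filter.map c l').NeBot := hl'.map c
          obtain ⟨m'', hm''le, hm''ne, a, b, hm''col⟩ := hconv (Filter.map c l') this hclus
          set l₂ : Filter G := l' ⊓ Filter.comap c m'' with hl₂def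
          have hmap2 : Filter.map c l₂ = m'' := by
            rw [hl₂def, Filter.push_pull]
            exact inf_eq_right.mpr hm''le
          haveI hl₂ : l₂.NeBot := by
            have : (Filter.map c l₂).NeBot := by rw [hmap2]; exact hm''ne
            exact this.of_map
          have hcol₂ : CollapsesF (fun (g : G) (t : T) => g • t) (Filter.map c l₂) a b := by
            rw [hmap2]; exact hm''col
          -- the filter map (i ∘ c) l₂ converges to j a
          have hconv_attr : Filter.map i (Filter.map c l₂) ≤ 𝓝 (j a) := by
            rw [le_nhds_iff]
            intro O hjaO hOopen
            by_contra hOnot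
            have hnev : ¬ ∀ᶠ x in Filter.map c l₂, x ∈ i ⁻¹' O := by
              simpa only [Filter.eventually_iff, Set.setOf_mem_eq, Filter.mem_map] using hOnot
            have hfr : ∃ᶠ x in Filter.map c l₂, x ∈ i ⁻¹' Oᶜ :=
              (Filter.not_eventually.mp hnev).mono fun x hx => hx
            haveI hm₃ : (Filter.map c l₂ ⊓ 𝓟 (i ⁻¹' Oᶜ)).NeBot :=
              Filter.frequently_mem_iff_neBot.mp hfr
            have hmem3 : a ∈ attractorPtsF (fun (g : G) (t : T) => g • t) (i ⁻¹' Oᶜ) :=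
              ⟨b, _, hm₃, inf_le_right, collapsesF_mono hcol₂ inf_le_left⟩
            exact (((hchar Oᶜ).mp hOopen.isClosed_compl).2.2 hmem3) hjaO
          have hmemK : Filter.map i (Filter.map c l₂) ≤ 𝓟 K := by
            rw [Filter.map_map, Filter.le_principal_iff, Filter.mem_map]
            exact Filter.mem_of_superset (Filter.mem_inf_of_left hSl')
              fun g hg => (hcS g hg).1
          have hjaK : j a ∈ K := by
            haveI : (Filter.map i (Filter.map c l₂)).NeBot := (hl₂.map c).map i
            have hcp : ClusterPt (j a) (𝓟 K) :=
              Filter.neBot_of_le (le_inf hconv_attr hmemK)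
            rw [← hKclosed.closure_eq]
            exact mem_closure_iff_clusterPt.mpr hcp
          have hav : a ≠ v := fun h => hvK (h ▸ hjaK)
          refine ⟨l₂, inf_le_left, hl₂, b, ?_⟩
          intro K' hK'c hbK'
          obtain ⟨V', V, hV'o, hVo, hvV', haV, hVd⟩ := t2_separation (Ne.symm hav)
          have hvnc : v ∉ closure V := by
            intro hv
            have : closure V ⊆ V'ᶜ :=
              closure_minimal (Set.disjoint_right.mp hVd) hV'o.isClosed_compl
            exact this hv hvV'
          refine ⟨closure V, isClosed_closure.isCompact, hvnc, ?_⟩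
          have hevV := hcol₂ K' hK'c hbK' V (hVo.mem_nhds haV)
          rw [Filter.eventually_map] at hevV
          exact hevV.mono fun g hg t ht => subset_closure (hg t ht)
      obtain ⟨l₂, hl₂le, hl₂ne, b, hkey⟩ := key
      haveI := hl₂ne
      have hmne : (Filter.map (fun g => g * c g) l₂).NeBot := hl₂ne.map _
      have hmH : Filter.map (fun g => g * c g) l₂ ≤ 𝓟 H := by
        rw [Filter.le_principal_iff, Filter.mem_map]
        exact Filter.mem_of_superset (hl₂le hSl') fun g hg => (hcS g hg).2
      have hmcol : CollapsesF (fun (g : G) (t : T) => g • t)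
          (Filter.map (fun g => g * c g) l₂) u b := by
        intro K' hK'c hbK' U'' hU''
        obtain ⟨C, hCc, hvC, hev⟩ := hkey K' hK'c hbK'
        have hev2 : ∀ᶠ g in l₂, ∀ s ∈ C, g • s ∈ U'' := by
          have := hcol C hCc hvC U'' hU''
          exact (this.filter_mono (hl₂le.trans inf_le_left)).mono fun g hg s hs => hg s hs
        rw [Filter.eventually_map]
        filter_upwards [hev, hev2] with g h1 h2 t ht
        show (g * c g) • t ∈ U''
        rw [mul_smul]
        exact h2 _ (h1 t ht)
      have humem : u ∈ attractorPtsF (fun (g : G) (t : T) => g • t) H :=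
        ⟨b, _, hmne, hmH, hmcol⟩
      exact (hattr humem) hjuU'
    filter_upwards [hAev, hBev] with g hgA hgB k hk
    rcases (by rw [hcover]; trivial : k ∈ Set.range i ∪ Set.range j) with ⟨h, rfl⟩ | ⟨t, rfl⟩
    · rw [hX1]
      exact hU'sub (hgA h hk)
    · rw [hX2]
      exact hU'sub (hgB t hk)
  refine ⟨?_, main⟩
  intro l hl hnc
  obtain ⟨l', hle, hne, a, b, hcol⟩ := hconv l hl hnc
  exact ⟨l', hle, hne, j a, j b, main l' a b hne hcol⟩
end

section
/- Let G be a locally compact Hausdorff group acting with the convergence property on compact Hausdorff spaces M and N with |M| ≥ 3, and let f : M → N be a non-constant continuous G-equivariant map. Then the map f̃ : G ⊔ M → G ⊔ N between the attractor sums extending f by the identity on G is continuous. -/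
open Filter Topology Set Pointwise

private lemma collapsesF_tendsto {G T : Type*} [TopologicalSpace T] {act : G → T → T}
    {l : Filter G} {a b : T} (h : CollapsesF act l a b) {t : T} (ht : t ≠ b) :
    Filter.Tendsto (fun g => act g t) l (nhds a) := by
  rw [Filter.tendsto_def]
  intro s hs
  have h2 := h {t} isCompact_singleton (by simpa using Ne.symm ht) s hs
  exact h2.mono fun g hg => hg t rfl

/-- A non-constant continuous equivariant map `f : M → N` between convergence `G`-compacta
with `|M| ≥ 3` extends, by the identity on `G`, to a continuous map between attractor sums. -/
theorem attractorSum_extend_equivariant_continuous {G M N : Type*}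
    [Group G] [TopologicalSpace G] [IsTopologicalGroup G] [LocallyCompactSpace G] [T2Space G]
    [TopologicalSpace M] [CompactSpace M] [T2Space M]
    [TopologicalSpace N] [CompactSpace N] [T2Space N]
    [MulAction G M] [ContinuousSMul G M] [MulAction G N] [ContinuousSMul G N]
    (hconvM : IsConvergenceF (fun (g : G) (m : M) => g • m))
    (hconvN : IsConvergenceF (fun (g : G) (n : N) => g • n))
    (hM : 3 ≤ (Set.univ : Set M).encard)
    (f : M → N) (hf : Continuous f)
    (hequiv : ∀ (g : G) (m : M), f (g • m) = g • f m)
    (hnonconst : ¬ ∃ c : N, ∀ m : M, f m = c)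
    (X : Type*) [TopologicalSpace X] (iX : G → X) (jX : M → X)
    (hiX : Function.Injective iX) (hjX : Function.Injective jX)
    (hcoverX : Set.range iX ∪ Set.range jX = Set.univ)
    (hdisjX : Set.range iX ∩ Set.range jX = ∅)
    (hcharX : ∀ P : Set X, IsClosed P ↔
      IsClosed (iX ⁻¹' P) ∧ IsClosed (jX ⁻¹' P) ∧
        attractorPtsF (fun (g : G) (m : M) => g • m) (iX ⁻¹' P) ⊆ jX ⁻¹' P)
    (Y : Type*) [TopologicalSpace Y] (iY : G → Y) (jY : N → Y)
    (hiY : Function.Injective iY) (hjY : Function.Injective jY)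
    (hcoverY : Set.range iY ∪ Set.range jY = Set.univ)
    (hdisjY : Set.range iY ∩ Set.range jY = ∅)
    (hcharY : ∀ P : Set Y, IsClosed P ↔
      IsClosed (iY ⁻¹' P) ∧ IsClosed (jY ⁻¹' P) ∧
        attractorPtsF (fun (g : G) (n : N) => g • n) (iY ⁻¹' P) ⊆ jY ⁻¹' P)
    (ftil : X → Y)
    (hftil1 : ∀ g : G, ftil (iX g) = iY g)
    (hftil2 : ∀ m : M, ftil (jX m) = jY (f m)) :
    Continuous ftil := by
  rw [continuous_iff_isClosed]
  intro P hP
  obtain ⟨hPG, hPN, hPattr⟩ := (hcharY P).mp hP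
  rw [hcharX]
  have h1 : iX ⁻¹' (ftil ⁻¹' P) = iY ⁻¹' P := by ext g; simp [Set.mem_preimage, hftil1]
  have h2 : jX ⁻¹' (ftil ⁻¹' P) = f ⁻¹' (jY ⁻¹' P) := by ext m; simp [Set.mem_preimage, hftil2]
  refine ⟨by rw [h1]; exact hPG, by rw [h2]; exact hPN.preimage hf, ?_⟩
  rw [h1, h2]
  rintro u ⟨v, l, hlne, hlH, hcol⟩
  haveI := hlne
  -- two distinct points different from v
  have hnt : ∃ k₁ k₂ : M, k₁ ≠ v ∧ k₂ ≠ v ∧ k₁ ≠ k₂ := by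
    have hcard : 1 < (Set.univ \ {v} : Set M).encard := by
      by_contra hle
      push_neg at hle
      have heq := Set.encard_diff_singleton_add_one (Set.mem_univ v)
      have h3 : (Set.univ : Set M).encard ≤ 2 := by
        rw [← heq]
        calc (Set.univ \ {v} : Set M).encard + 1 ≤ 1 + 1 := add_le_add_left hle 1
        _ = 2 := one_add_one_eq_two
      have : (3 : ℕ∞) ≤ 2 := hM.trans h3
      norm_num at this
    obtain ⟨k₁, k₂, hk₁, hk₂, hne⟩ := Set.one_lt_encard_iff.mp hcard
    exact ⟨k₁, k₂, by simpa using hk₁.2, by simpa using hk₂.2, hne⟩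
  obtain ⟨k₁, k₂, hk₁v, hk₂v, hk₁₂⟩ := hnt
  -- l has no cluster points in G
  have hnoclus : ∀ x : G, ¬ ClusterPt x l := by
    intro x hx
    haveI : (nhds x ⊓ l).NeBot := hx
    have hle : nhds x ⊓ l ≤ l := inf_le_right
    have hx1 : Filter.Tendsto (fun g : G => g • k₁) (nhds x ⊓ l) (nhds (x • k₁)) :=
      (tendsto_id.mono_left inf_le_left).smul tendsto_const_nhds
    have hx2 : Filter.Tendsto (fun g : G => g • k₂) (nhds x ⊓ l) (nhds (x • k₂)) :=
      (tendsto_id.mono_left inf_le_left).smul tendsto_const_nhds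
    have hu1 : Filter.Tendsto (fun g : G => g • k₁) (nhds x ⊓ l) (nhds u) :=
      (collapsesF_tendsto hcol hk₁v).mono_left hle
    have hu2 : Filter.Tendsto (fun g : G => g • k₂) (nhds x ⊓ l) (nhds u) :=
      (collapsesF_tendsto hcol hk₂v).mono_left hle
    have e1 : x • k₁ = u := tendsto_nhds_unique hx1 hu1
    have e2 : x • k₂ = u := tendsto_nhds_unique hx2 hu2
    exact hk₁₂ (MulAction.injective x (e1.trans e2.symm))
  obtain ⟨l', hl'le, hl'ne, a, b, hcolN⟩ := hconvN l hlne hnoclus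
  haveI := hl'ne
  have haattr : a ∈ jY ⁻¹' P := hPattr ⟨b, l', hl'ne, hl'le.trans hlH, hcolN⟩
  have hmain : f u = a := by
    have hm : ∃ m : M, m ≠ v ∧ f m ≠ b := by
      by_contra hB
      push_neg at hB
      by_cases hvc : v ∈ closure ({v}ᶜ : Set M)
      · -- v not isolated: f is constant, contradiction
        have hmaps : Set.MapsTo f ({v}ᶜ : Set M) ({b} : Set N) := fun m hm =>
          Set.mem_singleton_iff.mpr (hB m hm)
        have hfv : f v ∈ closure ({b} : Set N) := hmaps.closure hf hvc
        rw [closure_singleton] at hfv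
        exact hnonconst ⟨b, fun m => by
          by_cases hmv : m = v
          · rw [hmv]; exact hfv
          · exact hB m hmv⟩
      · -- v isolated
        have hKclosed : IsClosed ({v}ᶜ : Set M) :=
          isClosed_of_closure_subset fun x hx hxv =>
            hvc (by rwa [Set.mem_singleton_iff.mp hxv] at hx)
        have hKcomp : IsCompact ({v}ᶜ : Set M) := hKclosed.isCompact
        have hfvb : f v ≠ b := by
          intro hfvb
          exact hnonconst ⟨b, fun m => by
            by_cases hmv : m = v
            · rw [hmv]; exact hfvb
            · exact hB m hmv⟩
        have hfix : ∀ g : G, g • v = v := by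
          intro g
          by_contra hgv
          have hgb : g • b = b := by
            rcases em (g • k₁ = v) with h' | h'
            · have h'' : g • k₂ ≠ v := fun hh => hk₁₂ (MulAction.injective g (h'.trans hh.symm))
              have hgk := hB (g • k₂) h''
              rw [hequiv, hB k₂ hk₂v] at hgk
              exact hgk
            · have hgk := hB (g • k₁) h'
              rw [hequiv, hB k₁ hk₁v] at hgk
              exact hgk
          have hm' : g⁻¹ • v ≠ v := by
            intro h
            apply hgv
            have h3 := congrArg (fun x => g • x) h
            simpa [smul_inv_smul] using h3.symm
          have hfvb2 : f v = b := by
            have hb1 := hB (g⁻¹ • v) hm'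
            have hb2 := hequiv g (g⁻¹ • v)
            rw [smul_inv_smul, hb1, hgb] at hb2
            exact hb2
          exact hfvb hfvb2
        -- contradiction from the collapse on the compact set {v}ᶜ
        have hk₀ : ∃ k₀ : M, k₀ ≠ v ∧ k₀ ≠ u := by
          rcases em (k₁ = u) with h' | h'
          · exact ⟨k₂, hk₂v, fun hh => hk₁₂ (h'.trans hh.symm)⟩
          · exact ⟨k₁, hk₁v, h'⟩
        obtain ⟨k₀, hk₀v, hk₀u⟩ := hk₀
        have hU : ({k₀}ᶜ : Set M) ∈ nhds u :=
          isOpen_compl_singleton.mem_nhds (by simpa using Ne.symm hk₀u)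
        have hev := hcol ({v}ᶜ) hKcomp (by simp) ({k₀}ᶜ) hU
        obtain ⟨g, hg⟩ := hev.exists
        have hk' : g⁻¹ • k₀ ∈ ({v}ᶜ : Set M) := by
          intro hh
          apply hk₀v
          have h3 := congrArg (fun x => g • x) (Set.mem_singleton_iff.mp hh)
          simpa [smul_inv_smul, hfix g] using h3
        have hfin : g • g⁻¹ • k₀ ∈ ({k₀}ᶜ : Set M) := hg (g⁻¹ • k₀) hk'
        rw [smul_inv_smul] at hfin
        exact hfin rfl
    obtain ⟨m, hmv, hmb⟩ := hm
    have ht1 : Filter.Tendsto (fun g : G => g • m) l (nhds u) := collapsesF_tendsto hcol hmv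
    have ht2 : Filter.Tendsto (fun g : G => f (g • m)) l (nhds (f u)) := (hf.tendsto u).comp ht1
    have ht3 : Filter.Tendsto (fun g : G => g • f m) l' (nhds (f u)) := by
      have heq : (fun g : G => f (g • m)) = fun g : G => g • f m := funext fun g => hequiv g m
      exact (heq ▸ ht2).mono_left hl'le
    have ht4 : Filter.Tendsto (fun g : G => g • f m) l' (nhds a) := collapsesF_tendsto hcolN hmb
    exact tendsto_nhds_unique ht3 ht4
  show f u ∈ jY ⁻¹' P
  rw [hmain]
  exact haattr
end
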